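/- arXiv:2510.25403 — 8 statements merged into one kernel-verified Lean document; each statement's English description precedes it below -/
import Mathlib

section
/- Let H and K be cyclic subgroups of a finite group G with H ⊆ K. If φ(|H|) = φ(|K|), then either |H| = |K| or |K| = 2|H|. -/
def padj {G : Type*} [Group G] (a b : G) : Prop :=
  a ≠ b ∧ (Subgroup.zpowers a ≤ Subgroup.zpowers b ∨ Subgroup.zpowers b ≤ Subgroup.zpowers a)

def pnbhd {G : Type*} [Group G] (a : G) : Set G := {x | padj a x}

def closedTwins {G : Type*} [Group G] (a : G) : Set G :=
  {b | padj a b ∧ pnbhd a \ {b} = pnbhd b \ {a}}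

noncomputable def Ncount {G : Type*} [Group G] (a : G) : ℕ := (closedTwins a).ncard + 1

def eadj {G : Type*} [Group G] (a b : G) : Prop :=
  a ≠ b ∧ ∃ c : G, a ∈ Subgroup.zpowers c ∧ b ∈ Subgroup.zpowers c

theorem stmt1 {G : Type*} [Group G] [Finite G] (H K : Subgroup G)
    (hH : IsCyclic H) (hK : IsCyclic K) (hHK : H ≤ K)
    (heq : Nat.totient (Nat.card H) = Nat.totient (Nat.card K)) :
    Nat.card H = Nat.card K ∨ Nat.card K = 2 * Nat.card H := by
  obtain ⟨d, hd⟩ := Subgroup.card_dvd_of_le hHK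
  have hm : 0 < Nat.card H := Nat.card_pos
  have htpos : 0 < Nat.totient (Nat.card H) := Nat.totient_pos.2 hm
  have h1 : Nat.totient (Nat.card H) * Nat.totient d ≤ Nat.totient (Nat.card H) :=
    calc Nat.totient (Nat.card H) * Nat.totient d ≤ Nat.totient (Nat.card H * d) :=
        Nat.totient_super_multiplicative _ _
      _ = Nat.totient (Nat.card H) := by rw [← hd, ← heq]
  have hd1 : Nat.totient d ≤ 1 := by
    by_contra h
    nlinarith
  have hdpos : 0 < d := by
    rcases Nat.eq_zero_or_pos d with rfl | h
    · exfalso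
      have : 0 < Nat.card K := Nat.card_pos
      omega
    · exact h
  have : Nat.totient d = 1 := le_antisymm hd1 (Nat.totient_pos.2 hdpos)
  rcases Nat.totient_eq_one_iff.mp this with rfl | rfl
  · left; omega
  · right; omega
end

section
/- Let G be a finite group and a ∈ G. Every generator of ⟨a⟩ other than a itself is a closed twin of a in the power graph of G. In particular, φ(ord(a)) ≤ N_a, where N_a is one plus the number of closed twins of a. -/
/-! A generator `b ≠ a` of `⟨a⟩` generates the same cyclic subgroup as `a`, and adjacency in the
power graph only sees the cyclic subgroup generated by a vertex; so `a` and `b` have the same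
neighbours apart from each other. The generators of the cyclic group `⟨a⟩` of order `n = ord a`
are its elements of order `n`, and there are `φ n` of them. -/

theorem padj_iff_of_zpowers_eq {G : Type*} [Group G] {a b x : G}
    (h : Subgroup.zpowers a = Subgroup.zpowers b) (hxa : x ≠ a) (hxb : x ≠ b) :
    padj a x ↔ padj b x := by
  simp only [padj, h, Ne.symm hxa, Ne.symm hxb, ne_eq, not_false_eq_true, true_and]

theorem mem_closedTwins_of_zpowers_eq {G : Type*} [Group G] {a b : G}
    (h : Subgroup.zpowers b = Subgroup.zpowers a) (hba : b ≠ a) : b ∈ closedTwins a := by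
  refine ⟨⟨hba.symm, Or.inr h.le⟩, Set.ext fun x => ?_⟩
  simp only [pnbhd, Set.mem_sdiff, Set.mem_ofPred_eq, Set.mem_singleton_iff]
  constructor
  · rintro ⟨hax, hxb⟩
    exact ⟨(padj_iff_of_zpowers_eq h.symm (Ne.symm hax.1) hxb).1 hax, Ne.symm hax.1⟩
  · rintro ⟨hbx, hxa⟩
    exact ⟨(padj_iff_of_zpowers_eq h.symm hxa (Ne.symm hbx.1)).2 hbx, Ne.symm hbx.1⟩

theorem zpowers_eq_zpowers_iff_mem_and_orderOf_eq {G : Type*} [Group G] [Finite G] {a b : G} :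
    Subgroup.zpowers b = Subgroup.zpowers a ↔ b ∈ Subgroup.zpowers a ∧ orderOf b = orderOf a := by
  constructor
  · intro h
    exact ⟨h ▸ Subgroup.mem_zpowers b, by rw [← Nat.card_zpowers, h, Nat.card_zpowers]⟩
  · rintro ⟨hb, hord⟩
    exact Subgroup.eq_of_le_of_card_ge (Subgroup.zpowers_le.mpr hb)
      (by rw [Nat.card_zpowers, Nat.card_zpowers, hord])

theorem ncard_setOf_zpowers_eq {G : Type*} [Group G] [Finite G] (a : G) :
    {b : G | Subgroup.zpowers b = Subgroup.zpowers a}.ncard = Nat.totient (orderOf a) := by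
  classical
  let H := Subgroup.zpowers a
  have : Fintype H := Fintype.ofFinite H
  have hgens : {b : G | Subgroup.zpowers b = Subgroup.zpowers a} =
      Subtype.val '' {b : H | orderOf b = orderOf a} := by
    ext b
    simp only [Set.mem_ofPred_eq, Set.mem_image, zpowers_eq_zpowers_iff_mem_and_orderOf_eq]
    constructor
    · rintro ⟨hb, hord⟩
      exact ⟨⟨b, hb⟩, by rwa [Subgroup.orderOf_mk], rfl⟩
    · rintro ⟨b, hord, rfl⟩
      exact ⟨b.2, by rwa [Subgroup.orderOf_coe]⟩
  have hcard : Fintype.card H = orderOf a := by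
    rw [← Nat.card_eq_fintype_card, Nat.card_zpowers]
  rw [hgens, Set.ncard_image_of_injective _ Subtype.val_injective, Set.ncard_eq_toFinset_card',
    Set.toFinset_ofPred, IsCyclic.card_orderOf_eq_totient hcard.symm.dvd]

theorem stmt4 {G : Type*} [Group G] [Finite G] (a : G) :
    ({b : G | Subgroup.zpowers b = Subgroup.zpowers a} \ {a} ⊆ closedTwins a) ∧
      Nat.totient (orderOf a) ≤ Ncount a := by
  have hsub : {b : G | Subgroup.zpowers b = Subgroup.zpowers a} \ {a} ⊆ closedTwins a :=
    fun b ⟨hb, hba⟩ => mem_closedTwins_of_zpowers_eq hb hba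
  refine ⟨hsub, ?_⟩
  have hgens : {b : G | Subgroup.zpowers b = Subgroup.zpowers a} ⊆ insert a (closedTwins a) := by
    rwa [Set.sdiff_subset_iff, Set.singleton_union] at hsub
  calc Nat.totient (orderOf a) = {b : G | Subgroup.zpowers b = Subgroup.zpowers a}.ncard :=
        (ncard_setOf_zpowers_eq a).symm
    _ ≤ (insert a (closedTwins a)).ncard := Set.ncard_le_ncard hgens
    _ ≤ Ncount a := Set.ncard_insert_le a _
end

section
/- Let G be a finite group and h ∈ G an element of prime-power order p^α with α ≥ 1. If k is a closed twin of h in the power graph of G, then the order of k is a power of p (possibly p^0 = 1). -/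
theorem stmt7 {G : Type*} [Group G] [Finite G] (h k : G) (p α : ℕ)
    (hp : p.Prime) (hα : 1 ≤ α) (hord : orderOf h = p ^ α)
    (htwin : k ∈ closedTwins h) :
    ∃ s : ℕ, orderOf k = p ^ s := by
  obtain ⟨⟨hne, hadj⟩, hnb⟩ := htwin
  have hk0 : orderOf k ≠ 0 := (orderOf_pos k).ne'
  -- every prime dividing orderOf k is p
  have key : ∀ {q : ℕ}, q.Prime → q ∣ orderOf k → q = p := by
    intro q hq hqd
    by_contra hqp
    -- first handle the case orderOf k = q
    have hdvd : orderOf h ∣ orderOf k ∨ orderOf k ∣ orderOf h := by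
      rcases hadj with h1 | h1
      · exact Or.inl (orderOf_dvd_of_mem_zpowers (h1 (Subgroup.mem_zpowers h)))
      · exact Or.inr (orderOf_dvd_of_mem_zpowers (h1 (Subgroup.mem_zpowers k)))
    have hqord : q ∣ p ^ α ∨ orderOf k = q := by
      by_cases hkq : orderOf k = q
      · exact Or.inr hkq
      · -- build element x of order q in ⟨k⟩
        set x := k ^ (orderOf k / q) with hx
        have hxo : orderOf x = q := orderOf_pow_orderOf_div hk0 hqd
        have hxk : x ≠ k := by
          intro he
          exact hkq (by rw [← hxo, he])
        have hxh : x ≠ h := by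
          intro he
          rw [he, hord] at hxo
          have hpq : p ∣ q := hxo ▸ dvd_pow_self p (by omega)
          exact hqp ((Nat.prime_dvd_prime_iff_eq hp hq).mp hpq).symm
        have hxmem : x ∈ pnbhd k \ {h} := by
          constructor
          · refine ⟨(fun he => hxk he.symm), Or.inr (Subgroup.zpowers_le.mpr ?_)⟩
            rw [hx]
            exact Subgroup.pow_mem _ (Subgroup.mem_zpowers k) _
          · exact hxh
        rw [← hnb] at hxmem
        obtain ⟨⟨_, hadj2⟩, _⟩ := hxmem
        left
        rcases hadj2 with h2 | h2
        · exfalso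
          have hd := orderOf_dvd_of_mem_zpowers (h2 (Subgroup.mem_zpowers h))
          rw [hord, hxo] at hd
          have : p ∣ q := (dvd_pow_self p (by omega)).trans hd
          exact hqp ((Nat.prime_dvd_prime_iff_eq hp hq).mp this).symm
        · have hd := orderOf_dvd_of_mem_zpowers (h2 (Subgroup.mem_zpowers x))
          rwa [hord, hxo] at hd
    rcases hqord with h1 | h1
    · exact hqp ((Nat.prime_dvd_prime_iff_eq hq hp).mp (hq.dvd_of_dvd_pow h1))
    · rcases hdvd with h2 | h2
      · rw [hord, h1] at h2
        have hpq : p ∣ q := dvd_trans (dvd_pow_self p (by omega)) h2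
        exact hqp ((Nat.prime_dvd_prime_iff_eq hp hq).mp hpq).symm
      · rw [hord, h1] at h2
        exact hqp ((Nat.prime_dvd_prime_iff_eq hq hp).mp (hq.dvd_of_dvd_pow h2))
  exact ⟨_, Nat.eq_prime_pow_of_unique_prime_dvd hk0 key⟩
end

section
/- Let G be a cyclic group of non-prime-power order n. Then N_a = φ(n) + 1 if a is the identity or a generator of G, and N_a = φ(ord(a)) otherwise. -/
section Aux

lemma sepD2 {n m m' : ℕ} (hn0 : n ≠ 0)
    (hn : ¬ ∃ p k : ℕ, p.Prime ∧ n = p ^ k)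
    (hm'n : m' ∣ n) (hmm' : m ∣ m') (hne : m ≠ m') (hm1 : 1 < m) :
    ∃ e, e ∣ n ∧ ((m ∣ e ∧ ¬ m' ∣ e ∧ ¬ e ∣ m') ∨ (e ∣ m' ∧ ¬ m ∣ e ∧ ¬ e ∣ m)) := by
  have hm'0 : m' ≠ 0 := fun h => hn0 (by simpa [h] using hm'n)
  have hm0 : m ≠ 0 := by omega
  have hex : ∃ p, m.factorization p < m'.factorization p := by
    by_contra h
    push_neg at h
    have : m' ∣ m := (Nat.factorization_le_iff_dvd hm'0 hm0).mp (fun p => h p)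
    exact hne (Nat.dvd_antisymm hmm' this)
  obtain ⟨p, hp⟩ := hex
  have hpprime : p.Prime := by
    by_contra hpp
    simp [Nat.factorization_eq_zero_of_not_prime _ hpp] at hp
  by_cases hB : ∃ q, q ≠ p ∧ q.Prime ∧ m'.factorization q < n.factorization q
  · obtain ⟨q, hqp, hq, hqlt⟩ := hB
    refine ⟨Nat.lcm m (q ^ n.factorization q), Nat.lcm_dvd (hmm'.trans hm'n) (Nat.ordProj_dvd n q), Or.inl ⟨Nat.dvd_lcm_left _ _, ?_, ?_⟩⟩
    · intro hdvd
      have hpow : (q ^ n.factorization q) ≠ 0 := pow_ne_zero _ hq.pos.ne'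
      have := (Nat.factorization_le_iff_dvd hm'0 (Nat.lcm_ne_zero hm0 hpow)).mpr hdvd p
      rw [Nat.factorization_lcm hm0 hpow] at this
      simp only [Finsupp.sup_apply, hq.factorization_pow, Finsupp.single_apply, if_neg hqp] at this
      omega
    · intro hdvd
      have : q ^ n.factorization q ∣ m' := (Nat.dvd_lcm_right _ _).trans hdvd
      have := (Nat.Prime.pow_dvd_iff_le_factorization hq hm'0).mp this
      omega
  · push_neg at hB
    have hBn : ∀ q, q ≠ p → q.Prime → m'.factorization q = n.factorization q := by
      intro q h1 h2
      have hle := (Nat.factorization_le_iff_dvd hm'0 hn0).mpr hm'n q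
      have := hB q h1 h2
      omega
    have hq : ∃ q, q.Prime ∧ q ∣ n ∧ q ≠ p := by
      by_contra h
      push_neg at h
      have := Nat.eq_prime_pow_of_unique_prime_dvd hn0
        (p := p) (fun {d} hd hdn => h d hd hdn)
      exact hn ⟨p, _, hpprime, this⟩
    obtain ⟨q, hq, hqn, hqp⟩ := hq
    have hvqm' : 0 < m'.factorization q := by
      rw [hBn q hqp hq]
      exact (Nat.Prime.factorization_pos_of_dvd hq hn0 hqn)
    have hqm' : q ∣ m' := Nat.dvd_of_factorization_pos hvqm'.ne'
    by_cases hqm : q ∣ m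
    · refine ⟨m' / q ^ m'.factorization q, (Nat.ordCompl_dvd m' q).trans hm'n,
        Or.inr ⟨Nat.ordCompl_dvd m' q, ?_, ?_⟩⟩
      · intro hdvd
        exact Nat.not_dvd_ordCompl hq hm'0 (hqm.trans hdvd)
      · intro hdvd
        have h0 : m' / q ^ m'.factorization q ≠ 0 := (Nat.ordCompl_pos q hm'0).ne'
        have := (Nat.factorization_le_iff_dvd h0 hm0).mpr hdvd p
        rw [Nat.factorization_ordCompl] at this
        rw [Finsupp.erase_ne (Ne.symm hqp)] at this
        omega
    · refine ⟨q ^ m'.factorization q, (Nat.ordProj_dvd m' q).trans hm'n,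
        Or.inr ⟨Nat.ordProj_dvd m' q, ?_, ?_⟩⟩
      · intro hdvd
        obtain ⟨r, hr, hrm⟩ := Nat.exists_prime_and_dvd (by omega : m ≠ 1)
        have : r ∣ q ^ m'.factorization q := hrm.trans hdvd
        have := (Nat.prime_dvd_prime_iff_eq hr hq).mp (hr.dvd_of_dvd_pow this)
        exact hqm (this ▸ hrm)
      · intro hdvd
        exact hqm ((dvd_pow_self q hvqm'.ne').trans hdvd)

open Subgroup

variable {G : Type*} [Group G] [Finite G]

lemma mem_zpowers_iff_dvd (hc : IsCyclic G) {a b : G} :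
    a ∈ zpowers b ↔ orderOf a ∣ orderOf b := by
  constructor
  · exact orderOf_dvd_of_mem_zpowers
  · intro h
    haveI := hc
    haveI := Fintype.ofFinite G
    classical
    have h1 : a ∈ {x : G | x ^ orderOf b = 1} := orderOf_dvd_iff_pow_eq_one.mp h
    have hsub : (zpowers b : Set G) ⊆ {x : G | x ^ orderOf b = 1} := by
      intro x hx
      exact orderOf_dvd_iff_pow_eq_one.mp (orderOf_dvd_of_mem_zpowers hx)
    have hle : ({x : G | x ^ orderOf b = 1} : Set G).ncard ≤ orderOf b := by
      have := IsCyclic.card_pow_eq_one_le (α := G) (n := orderOf b) (orderOf_pos b)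
      rw [Set.ncard_eq_toFinset_card', Set.toFinset_setOf]
      simpa using this
    have hcard : (zpowers b : Set G).ncard = orderOf b := by
      rw [← Nat.card_coe_set_eq]
      simpa using Nat.card_zpowers b
    have := Set.eq_of_subset_of_ncard_le hsub (by omega)
    rw [← this] at h1
    exact h1

lemma zle_iff_dvd (hc : IsCyclic G) {a b : G} :
    zpowers a ≤ zpowers b ↔ orderOf a ∣ orderOf b := by
  rw [← mem_zpowers_iff_dvd hc]
  exact ⟨fun h => h (mem_zpowers a), fun h => (zpowers_le).mpr h⟩

lemma ztop_iff (b : G) : zpowers b = ⊤ ↔ orderOf b = Nat.card G := by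
  rw [← Subgroup.card_eq_iff_eq_top, Nat.card_zpowers]

lemma exists_orderOf_eq_div (hc : IsCyclic G) {d : ℕ} (hd : d ∣ Nat.card G) :
    ∃ x : G, orderOf x = d := by
  obtain ⟨g, hg⟩ := hc.exists_generator
  have hog : orderOf g = Nat.card G := orderOf_eq_card_of_forall_mem_zpowers hg
  refine ⟨g ^ (Nat.card G / d), ?_⟩
  rw [orderOf_pow, hog]
  have h1 : Nat.gcd (Nat.card G) (Nat.card G / d) = Nat.card G / d :=
    Nat.gcd_eq_right (Nat.div_dvd_of_dvd hd)
  rw [h1, Nat.div_div_self hd Nat.card_pos.ne']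

lemma ncard_orderOf_eq (hc : IsCyclic G) {d : ℕ} (hd : d ∣ Nat.card G) :
    {x : G | orderOf x = d}.ncard = Nat.totient d := by
  haveI := hc
  haveI := Fintype.ofFinite G
  classical
  have := IsCyclic.card_orderOf_eq_totient (α := G) (d := d)
    (by rwa [← Nat.card_eq_fintype_card])
  rw [Set.ncard_eq_toFinset_card', Set.toFinset_setOf]
  simpa using this

lemma padj_iff (hc : IsCyclic G) {x y : G} :
    padj x y ↔ x ≠ y ∧ (orderOf x ∣ orderOf y ∨ orderOf y ∣ orderOf x) := by
  unfold padj
  rw [zle_iff_dvd hc, zle_iff_dvd hc]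

lemma adjAll {b : G} (hb : b = 1 ∨ zpowers b = ⊤) {x : G} (hx : x ≠ b) : padj b x := by
  rcases hb with hb | hb
  · exact ⟨fun h => hx h.symm, Or.inl (by rw [hb, Subgroup.zpowers_one_eq_bot]; exact bot_le)⟩
  · exact ⟨fun h => hx h.symm, Or.inr (by rw [hb]; exact le_top)⟩

lemma twin_break {u v x : G} (h1 : padj u x) (h2 : ¬ padj v x) (h4 : x ≠ v)
    (heq : pnbhd u \ {v} = pnbhd v \ {u}) : False := by
  have hx : x ∈ pnbhd u \ {v} := ⟨h1, h4⟩
  rw [heq] at hx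
  exact h2 hx.1

/-- For `b` not the identity and not a generator, there is a vertex non-adjacent to `b`
whose order is neither 1 nor `n`. -/
lemma key_notS (hc : IsCyclic G) (hnpp : ¬ ∃ p k : ℕ, p.Prime ∧ Nat.card G = p ^ k)
    {b : G} (hb : ¬ (b = 1 ∨ zpowers b = ⊤)) :
    ∃ x : G, ¬ padj b x ∧ x ≠ b ∧ orderOf x ≠ 1 ∧ orderOf x ≠ Nat.card G := by
  push_neg at hb
  have hn0 : Nat.card G ≠ 0 := Nat.card_pos.ne'
  have hm1 : 1 < orderOf b := by
    have := orderOf_pos b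
    have : orderOf b ≠ 1 := fun h => hb.1 (orderOf_eq_one_iff.mp h)
    omega
  have hmn : orderOf b ≠ Nat.card G := fun h => hb.2 ((ztop_iff b).mpr h)
  obtain ⟨e, hen, hdisj⟩ := sepD2 hn0 hnpp dvd_rfl (orderOf_dvd_natCard b) hmn hm1
  rcases hdisj with ⟨_, _, hcon⟩ | ⟨_, hme, hem⟩
  · exact absurd hen hcon
  · obtain ⟨x, hx⟩ := exists_orderOf_eq_div hc hen
    refine ⟨x, ?_, ?_, ?_, ?_⟩
    · intro hadj
      rcases (padj_iff hc).mp hadj with ⟨_, h | h⟩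
      · rw [hx] at h; exact hme h
      · rw [hx] at h; exact hem h
    · intro h; rw [h] at hx; exact hem (hx ▸ dvd_refl _) |>.elim
    · rw [hx]; intro h; exact hem (h ▸ one_dvd _)
    · rw [hx]; intro h; exact hme (h ▸ orderOf_dvd_natCard b)

end Aux

theorem stmt10 {G : Type*} [Group G] [Finite G] (hc : IsCyclic G)
    (hnpp : ¬ ∃ p k : ℕ, p.Prime ∧ Nat.card G = p ^ k) :
    ∀ a : G,
      ((a = 1 ∨ Subgroup.zpowers a = ⊤) →
          Ncount a = Nat.totient (Nat.card G) + 1) ∧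
        ((a ≠ 1 ∧ Subgroup.zpowers a ≠ ⊤) →
          Ncount a = Nat.totient (orderOf a)) := by
  intro a
  have hn0 : Nat.card G ≠ 0 := Nat.card_pos.ne'
  have hn1 : Nat.card G ≠ 1 := by
    intro h
    exact hnpp ⟨2, 0, Nat.prime_two, by simp [h]⟩
  constructor
  · -- a is identity or generator
    intro ha
    have hkey : closedTwins a = {b : G | b = 1 ∨ Subgroup.zpowers b = ⊤} \ {a} := by
      ext b
      constructor
      · rintro ⟨hadj, htwin⟩
        have hba : b ≠ a := fun h => hadj.1 h.symm
        refine ⟨?_, hba⟩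
        by_contra hbS
        obtain ⟨x, hnadj, hxb, hx1, hxn⟩ := key_notS hc hnpp hbS
        have hxa : x ≠ a := by
          rcases ha with h | h
          · intro hh; rw [hh, h] at hx1; exact hx1 orderOf_one
          · intro hh; rw [hh] at hxn; exact hxn ((ztop_iff a).mp h)
        exact twin_break (adjAll ha hxa) hnadj hxb htwin
      · rintro ⟨hbS, hba⟩
        refine ⟨adjAll ha hba, ?_⟩
        ext x
        simp only [Set.mem_diff, Set.mem_singleton_iff, pnbhd, Set.mem_setOf_eq]
        constructor
        · rintro ⟨hax, hxb⟩
          exact ⟨adjAll hbS hxb, fun h => hax.1 h.symm⟩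
        · rintro ⟨hbx, hxa⟩
          exact ⟨adjAll ha hxa, fun h => hbx.1 h.symm⟩
    have hSeq : {b : G | b = 1 ∨ Subgroup.zpowers b = ⊤}
        = insert (1 : G) {b : G | orderOf b = Nat.card G} := by
      ext b
      simp only [Set.mem_setOf_eq, Set.mem_insert_iff, ztop_iff]
    have h1notin : (1 : G) ∉ {b : G | orderOf b = Nat.card G} := by
      simp only [Set.mem_setOf_eq, orderOf_one]
      exact fun h => hn1 h.symm
    have hScard : {b : G | b = 1 ∨ Subgroup.zpowers b = ⊤}.ncard
        = Nat.totient (Nat.card G) + 1 := by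
      rw [hSeq, Set.ncard_insert_of_notMem h1notin, ncard_orderOf_eq hc dvd_rfl]
    have haS : a ∈ {b : G | b = 1 ∨ Subgroup.zpowers b = ⊤} := ha
    have hdiff : ({b : G | b = 1 ∨ Subgroup.zpowers b = ⊤} \ {a}).ncard
        = Nat.totient (Nat.card G) := by
      rw [Set.ncard_diff_singleton_of_mem haS, hScard]
      omega
    rw [Ncount, hkey, hdiff]
  · -- a is neither identity nor generator
    rintro ⟨ha1, hatop⟩
    have haS : ¬ (a = 1 ∨ Subgroup.zpowers a = ⊤) := by
      rintro (h | h)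
      exacts [ha1 h, hatop h]
    have hma : orderOf a ∣ Nat.card G := orderOf_dvd_natCard a
    have hm1 : 1 < orderOf a := by
      have := orderOf_pos a
      have : orderOf a ≠ 1 := fun h => ha1 (orderOf_eq_one_iff.mp h)
      omega
    have hmn : orderOf a ≠ Nat.card G := fun h => hatop ((ztop_iff a).mpr h)
    have hkey : closedTwins a = {b : G | orderOf b = orderOf a} \ {a} := by
      ext b
      constructor
      · rintro ⟨hadj, htwin⟩
        have hab : a ≠ b := hadj.1
        refine ⟨?_, fun h => hab h.symm⟩
        simp only [Set.mem_setOf_eq]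
        by_contra hne
        by_cases hbS : b = 1 ∨ Subgroup.zpowers b = ⊤
        · obtain ⟨x, hnadj, hxa, hx1, hxn⟩ := key_notS hc hnpp haS
          have hxb : x ≠ b := by
            rcases hbS with h | h
            · intro hh; rw [hh, h] at hx1; exact hx1 orderOf_one
            · intro hh; rw [hh] at hxn; exact hxn ((ztop_iff b).mp h)
          exact twin_break (adjAll hbS hxb) hnadj hxa htwin.symm
        · -- both a and b are neither identity nor generator
          push_neg at hbS
          have hmb1 : 1 < orderOf b := by
            have := orderOf_pos b
            have : orderOf b ≠ 1 := fun h => hbS.1 (orderOf_eq_one_iff.mp h)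
            omega
          have hmbn : orderOf b ≠ Nat.card G := fun h => hbS.2 ((ztop_iff b).mpr h)
          have hmbd : orderOf b ∣ Nat.card G := orderOf_dvd_natCard b
          have hcomp : orderOf a ∣ orderOf b ∨ orderOf b ∣ orderOf a := by
            rcases hadj.2 with h | h
            · exact Or.inl ((zle_iff_dvd hc).mp h)
            · exact Or.inr ((zle_iff_dvd hc).mp h)
          rcases hcomp with hdvd | hdvd
          · obtain ⟨e, hen, hdisj⟩ := sepD2 hn0 hnpp hmbd hdvd (Ne.symm hne) hm1
            obtain ⟨x, hx⟩ := exists_orderOf_eq_div hc hen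
            rcases hdisj with ⟨hme, hm'e, hem'⟩ | ⟨hem', hme, hem⟩
            · -- x adjacent to a, not to b
              have hxa : x ≠ a := by
                intro h; rw [h] at hx
                exact hem' (hx ▸ hdvd)
              have hxb : x ≠ b := by
                intro h; rw [h] at hx
                exact hm'e (hx ▸ dvd_refl _)
              have hax : padj a x := (padj_iff hc).mpr
                ⟨fun h => hxa h.symm, Or.inl (by rw [hx]; exact hme)⟩
              have hnbx : ¬ padj b x := by
                intro h
                rcases (padj_iff hc).mp h with ⟨_, h | h⟩
                · rw [hx] at h; exact hm'e h
                · rw [hx] at h; exact hem' h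
              exact twin_break hax hnbx hxb htwin
            · -- x adjacent to b, not to a
              have hxb : x ≠ b := by
                intro h; rw [h] at hx
                exact hme (hx ▸ hdvd)
              have hxa : x ≠ a := by
                intro h; rw [h] at hx
                exact hem (hx ▸ dvd_refl _)
              have hbx : padj b x := (padj_iff hc).mpr
                ⟨fun h => hxb h.symm, Or.inr (by rw [hx]; exact hem')⟩
              have hnax : ¬ padj a x := by
                intro h
                rcases (padj_iff hc).mp h with ⟨_, h | h⟩
                · rw [hx] at h; exact hme h
                · rw [hx] at h; exact hem h
              exact twin_break hbx hnax hxa htwin.symm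
          · obtain ⟨e, hen, hdisj⟩ := sepD2 hn0 hnpp hma hdvd hne hmb1
            obtain ⟨x, hx⟩ := exists_orderOf_eq_div hc hen
            rcases hdisj with ⟨hmbe, hme', hem'⟩ | ⟨hem, hmbe', hembp⟩
            · -- m_b ∣ e, ¬ m ∣ e, ¬ e ∣ m : x adjacent to b, not to a
              have hxb : x ≠ b := by
                intro h; rw [h] at hx
                exact hem' (hx ▸ hdvd)
              have hxa : x ≠ a := by
                intro h; rw [h] at hx
                exact hme' (hx ▸ dvd_refl _)
              have hbx : padj b x := (padj_iff hc).mpr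
                ⟨fun h => hxb h.symm, Or.inl (by rw [hx]; exact hmbe)⟩
              have hnax : ¬ padj a x := by
                intro h
                rcases (padj_iff hc).mp h with ⟨_, h | h⟩
                · rw [hx] at h; exact hme' h
                · rw [hx] at h; exact hem' h
              exact twin_break hbx hnax hxa htwin.symm
            · -- e ∣ m, ¬ m_b ∣ e, ¬ e ∣ m_b : x adjacent to a, not to b
              have hxa : x ≠ a := by
                intro h; rw [h] at hx
                exact hmbe' (hx ▸ hdvd)
              have hxb : x ≠ b := by
                intro h; rw [h] at hx
                exact hmbe' (hx ▸ dvd_refl _)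
              have hax : padj a x := (padj_iff hc).mpr
                ⟨fun h => hxa h.symm, Or.inr (by rw [hx]; exact hem)⟩
              have hnbx : ¬ padj b x := by
                intro h
                rcases (padj_iff hc).mp h with ⟨_, h | h⟩
                · rw [hx] at h; exact hmbe' h
                · rw [hx] at h; exact hembp h
              exact twin_break hax hnbx hxb htwin
      · rintro ⟨hb, hba⟩
        simp only [Set.mem_setOf_eq] at hb
        have hz : Subgroup.zpowers a = Subgroup.zpowers b :=
          le_antisymm ((zle_iff_dvd hc).mpr (by rw [hb]))
            ((zle_iff_dvd hc).mpr (by rw [hb]))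
        refine ⟨⟨fun h => hba h.symm, Or.inl hz.le⟩, ?_⟩
        ext x
        simp only [Set.mem_diff, Set.mem_singleton_iff, pnbhd, Set.mem_setOf_eq, padj, hz]
        constructor
        · rintro ⟨⟨h1, h2⟩, h3⟩
          exact ⟨⟨Ne.symm h3, h2⟩, Ne.symm h1⟩
        · rintro ⟨⟨h1, h2⟩, h3⟩
          exact ⟨⟨Ne.symm h3, h2⟩, Ne.symm h1⟩
    have haO : a ∈ {b : G | orderOf b = orderOf a} := rfl
    have htot : 0 < Nat.totient (orderOf a) := Nat.totient_pos.mpr (orderOf_pos a)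
    have hcard : {b : G | orderOf b = orderOf a}.ncard = Nat.totient (orderOf a) :=
      ncard_orderOf_eq hc hma
    rw [Ncount, hkey, Set.ncard_diff_singleton_of_mem haO, hcard]
    omega
end

section
/- Let G be a finite group with ⟨h⟩ strictly contained in ⟨k⟩, and let x be a closed twin of h in the power graph of G. Then the three cyclic subgroups ⟨x⟩, ⟨h⟩, ⟨k⟩ form a chain under inclusion (i.e., any two of them are comparable). -/
theorem stmt12 {G : Type*} [Group G] [Finite G] (h k x : G)
    (hsub : Subgroup.zpowers h < Subgroup.zpowers k)
    (hx : x ∈ closedTwins h) :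
    (Subgroup.zpowers x ≤ Subgroup.zpowers h ∨ Subgroup.zpowers h ≤ Subgroup.zpowers x) ∧
      (Subgroup.zpowers x ≤ Subgroup.zpowers k ∨ Subgroup.zpowers k ≤ Subgroup.zpowers x) := by
  obtain ⟨⟨hne, hcomp⟩, heq⟩ := hx
  refine ⟨hcomp.symm, ?_⟩
  rcases eq_or_ne k x with rfl | hkx
  · left; exact le_refl _
  · have hhk : h ≠ k := fun e => hsub.ne (by rw [e])
    have hk : k ∈ pnbhd h \ {x} := ⟨⟨hhk, Or.inl hsub.le⟩, hkx⟩
    rw [heq] at hk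
    exact hk.1.2
end

section
/- Let G be a finite non-cyclic group and let h, k ∈ G with ⟨h⟩ ⊆ ⟨k⟩. Then N_h ≤ N_k. That is, the closed-twin counting function a ↦ N_a is monotone on the poset of cyclic subgroups of G. -/
open Subgroup Nat

theorem Nat.isPrimePow_of_forall_dvd_or_dvd {d n : ℕ} (hn : n ≠ 0) (hd : d ≠ 1) (hdn : d ∣ n)
    (hne : d ≠ n) (h : ∀ e, e ∣ n → e ∣ d ∨ d ∣ e) : IsPrimePow n := by
  obtain ⟨c, rfl⟩ := hdn
  have hc : c ≠ 1 := by rintro rfl; simp at hne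
  have hd0 : d ≠ 0 := by rintro rfl; simp at hn
  set p := c.minFac
  have hp : p.Prime := minFac_prime hc
  have hdp : d ∣ p ^ (d.factorization p + 1) := by
    refine (h _ ?_).resolve_left (pow_succ_factorization_not_dvd hd0 hp)
    rw [pow_succ]
    exact mul_dvd_mul (ordProj_dvd d p) (minFac_dvd c)
  refine isPrimePow_iff_unique_prime_dvd.mpr
    ⟨p, ⟨hp, dvd_mul_of_dvd_right (minFac_dvd c) d⟩, fun q ⟨hq, hqn⟩ => ?_⟩
  have hqd : q ∣ d := (h q hqn).elim id fun hdq => by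
    rw [((Nat.dvd_prime hq).mp hdq).resolve_left hd]
  exact (prime_dvd_prime_iff_eq hq hp).mp (hq.dvd_of_dvd_pow (hqd.trans hdp))

theorem IsPrimePow.le_two_mul_totient {n : ℕ} (hn : IsPrimePow n) : n ≤ 2 * φ n := by
  obtain ⟨p, r, hp, hr, rfl⟩ := hn
  rw [totient_prime_pow hp.nat_prime hr]
  obtain ⟨r, rfl⟩ := exists_eq_succ_of_ne_zero hr.ne'
  have := hp.nat_prime.two_le
  rw [Nat.succ_sub_one, pow_succ]
  calc p ^ r * p ≤ p ^ r * (2 * (p - 1)) := Nat.mul_le_mul_left _ (by omega)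
    _ = 2 * (p ^ r * (p - 1)) := by ring

section Cyclic

variable {G : Type*} [Group G]

lemma orderOf_dvd_of_zpowers_le {u v : G} (h : zpowers u ≤ zpowers v) : orderOf u ∣ orderOf v :=
  orderOf_dvd_of_mem_zpowers (zpowers_le.mp h)

variable [Finite G]

lemma mem_zpowers_pow_orderOf_div {x z : G} {m : ℕ} (hx : x ∈ zpowers z)
    (hm : m ∣ orderOf z) (hxm : orderOf x ∣ m) : x ∈ zpowers (z ^ (orderOf z / m)) := by
  obtain ⟨i, rfl⟩ := mem_zpowers_iff.mp hx
  have hm0 : (m : ℤ) ≠ 0 := by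
    exact_mod_cast ne_zero_of_dvd_ne_zero (orderOf_pos z).ne' hm
  have hzm : ((orderOf z / m : ℕ) : ℤ) * m ∣ i * m := by
    rw [← Nat.cast_mul, Nat.div_mul_cancel hm, orderOf_dvd_iff_zpow_eq_one, zpow_mul, zpow_natCast,
      ← orderOf_dvd_iff_pow_eq_one]
    exact hxm
  obtain ⟨c, rfl⟩ := Int.dvd_of_mul_dvd_mul_right hm0 hzm
  exact ⟨c, by rw [zpow_mul, zpow_natCast]⟩

lemma zpowers_eq_zpowers_iff_orderOf_eq {x g : G} (hx : x ∈ zpowers g) :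
    zpowers x = zpowers g ↔ orderOf x = orderOf g :=
  ⟨fun h => by rw [← Nat.card_zpowers, h, Nat.card_zpowers], fun h =>
    eq_of_le_of_card_ge (zpowers_le.mpr hx) (by rw [Nat.card_zpowers, Nat.card_zpowers, h])⟩

lemma zpowers_le_zpowers_iff_orderOf_dvd {u v z : G} (hu : u ∈ zpowers z) (hv : v ∈ zpowers z) :
    zpowers u ≤ zpowers v ↔ orderOf u ∣ orderOf v := by
  refine ⟨orderOf_dvd_of_zpowers_le, fun h => ?_⟩
  have hvz := orderOf_dvd_of_mem_zpowers hv
  have hv' : zpowers v = zpowers (z ^ (orderOf z / orderOf v)) :=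
    (zpowers_eq_zpowers_iff_orderOf_eq (mem_zpowers_pow_orderOf_div hv hvz dvd_rfl)).mpr
      (orderOf_pow_orderOf_div (orderOf_pos z).ne' hvz).symm
  rw [hv', zpowers_le]
  exact mem_zpowers_pow_orderOf_div hu hvz h

lemma zpowers_le_or_le_of_isPrimePow {y u v : G} (hy : IsPrimePow (orderOf y))
    (hu : u ∈ zpowers y) (hv : v ∈ zpowers y) :
    zpowers u ≤ zpowers v ∨ zpowers v ≤ zpowers u := by
  obtain ⟨p, r, hp, -, hpr⟩ := hy
  obtain ⟨i, -, hi⟩ := (Nat.dvd_prime_pow hp.nat_prime).mp (hpr ▸ orderOf_dvd_of_mem_zpowers hu)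
  obtain ⟨j, -, hj⟩ := (Nat.dvd_prime_pow hp.nat_prime).mp (hpr ▸ orderOf_dvd_of_mem_zpowers hv)
  rw [zpowers_le_zpowers_iff_orderOf_dvd hu hv, zpowers_le_zpowers_iff_orderOf_dvd hv hu, hi, hj]
  exact (le_total i j).imp (pow_dvd_pow p) (pow_dvd_pow p)

lemma ncard_setOf_zpowers_eq_s13 (g : G) :
    {x : G | zpowers x = zpowers g}.ncard = φ (orderOf g) := by
  classical
  have := Fintype.ofFinite (zpowers g)
  have himg : {x : G | zpowers x = zpowers g} =
      Subtype.val '' {y : zpowers g | orderOf y = orderOf g} := by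
    ext x
    simp only [Set.mem_ofPred_eq, Set.mem_image, Subtype.exists, orderOf_mk, exists_and_right,
      exists_eq_right]
    constructor
    · intro h
      have hx : x ∈ zpowers g := h ▸ mem_zpowers x
      exact ⟨hx, (zpowers_eq_zpowers_iff_orderOf_eq hx).mp h⟩
    · exact fun ⟨hx, h⟩ => (zpowers_eq_zpowers_iff_orderOf_eq hx).mpr h
  rw [himg, Set.ncard_image_of_injective _ Subtype.val_injective, Set.ncard_eq_toFinset_card',
    Set.toFinset_ofPred,
    IsCyclic.card_orderOf_eq_totient (by rw [← Nat.card_eq_fintype_card, Nat.card_zpowers])]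

end Cyclic

section PowerGraph

variable {G : Type*} [Group G]

def closedPnbhd (a : G) : Set G := {x | zpowers x ≤ zpowers a ∨ zpowers a ≤ zpowers x}

def twinClass (a : G) : Set G := {b | closedPnbhd b = closedPnbhd a}

lemma mem_closedPnbhd_self (a : G) : a ∈ closedPnbhd a := Or.inl le_rfl

lemma mem_closedPnbhd_comm {a x : G} : x ∈ closedPnbhd a ↔ a ∈ closedPnbhd x := Or.comm

lemma closedPnbhd_congr {a b : G} (h : zpowers a = zpowers b) : closedPnbhd a = closedPnbhd b := by
  simp only [closedPnbhd, h]

lemma closedPnbhd_one : closedPnbhd (1 : G) = Set.univ :=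
  Set.eq_univ_of_forall fun x => Or.inr (by simp)

lemma pnbhd_eq_closedPnbhd_diff (a : G) : pnbhd a = closedPnbhd a \ {a} := by
  ext x
  simp only [pnbhd, padj, closedPnbhd, Set.mem_ofPred_eq, Set.mem_sdiff, Set.mem_singleton_iff]
  exact ⟨fun ⟨hne, hx⟩ => ⟨hx.symm, Ne.symm hne⟩, fun ⟨hx, hne⟩ => ⟨Ne.symm hne, hx.symm⟩⟩

lemma closedTwins_eq_twinClass_diff (a : G) : closedTwins a = twinClass a \ {a} := by
  ext b
  have hpadj : padj a b ↔ b ∈ closedPnbhd a \ {a} := by rw [← pnbhd_eq_closedPnbhd_diff]; rfl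
  simp only [closedTwins, twinClass, Set.mem_ofPred_eq, hpadj, pnbhd_eq_closedPnbhd_diff,
    Set.sdiff_sdiff, Set.union_comm {b}]
  constructor
  · rintro ⟨⟨hb, hba⟩, heq⟩
    refine ⟨(sdiff_left_inj ?_ ?_).mp heq.symm, hba⟩
    · rintro x (rfl | rfl)
      exacts [mem_closedPnbhd_comm.mp hb, mem_closedPnbhd_self x]
    · rintro x (rfl | rfl)
      exacts [mem_closedPnbhd_self x, hb]
  · rintro ⟨heq, hba⟩
    exact ⟨⟨heq ▸ mem_closedPnbhd_self b, hba⟩, by rw [heq]⟩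

variable [Finite G]

lemma Ncount_eq_ncard_twinClass (a : G) : Ncount a = (twinClass a).ncard := by
  rw [Ncount, closedTwins_eq_twinClass_diff,
    Set.ncard_sdiff_singleton_add_one (show a ∈ twinClass a from rfl)]

lemma isPrimePow_orderOf_of_zpowers_subset_closedPnbhd {x y : G} (hx : x ≠ 1)
    (hlt : zpowers x < zpowers y) (hsub : (zpowers y : Set G) ⊆ closedPnbhd x) :
    IsPrimePow (orderOf y) := by
  refine Nat.isPrimePow_of_forall_dvd_or_dvd (orderOf_pos y).ne' (orderOf_eq_one_iff.not.mpr hx)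
    (orderOf_dvd_of_zpowers_le hlt.le)
    (fun h => hlt.ne ((zpowers_eq_zpowers_iff_orderOf_eq (zpowers_le.mp hlt.le)).mpr h))
    fun e he => ?_
  have hu := orderOf_pow_orderOf_div (orderOf_pos y).ne' he
  exact (hsub (npow_mem_zpowers y (orderOf y / e))).imp
    (fun h => hu ▸ orderOf_dvd_of_zpowers_le h) (fun h => hu ▸ orderOf_dvd_of_zpowers_le h)

lemma isPrimePow_orderOf_of_lt_of_closedPnbhd_eq (hnc : ¬IsCyclic G) {x y : G}
    (hlt : zpowers x < zpowers y) (hN : closedPnbhd x = closedPnbhd y) :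
    IsPrimePow (orderOf y) := by
  rcases eq_or_ne x 1 with rfl | hx
  -- `y` is comparable with everything, and whatever lies strictly above it has prime-power order
  · by_contra hy
    have hy1 : y ≠ 1 := by rintro rfl; simp at hlt
    refine hnc (isCyclic_iff_exists_zpowers_eq_top.mpr ⟨y, eq_top_iff.mpr fun g _ => ?_⟩)
    have hg : g ∈ closedPnbhd y := by rw [← hN, closedPnbhd_one]; exact Set.mem_univ g
    rcases hg with hgy | hyg
    · exact zpowers_le.mp hgy
    rcases hyg.eq_or_lt with heq | hlt'
    · exact heq ▸ mem_zpowers g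
    have hg : IsPrimePow (orderOf g) := isPrimePow_orderOf_of_zpowers_subset_closedPnbhd hy1 hlt'
      (by rw [← hN, closedPnbhd_one]; exact Set.subset_univ _)
    exact absurd (hg.dvd (orderOf_dvd_of_zpowers_le hyg) (orderOf_eq_one_iff.not.mpr hy1)) hy
  · exact isPrimePow_orderOf_of_zpowers_subset_closedPnbhd hx hlt
      (hN ▸ fun u hu => Or.inl (zpowers_le.mpr hu))

lemma prime_dvd_orderOf_of_lt_of_closedPnbhd_eq {x y z : G} (hlt : zpowers x < zpowers y)
    (hN : closedPnbhd x = closedPnbhd y) (hyz : zpowers y ≤ zpowers z) {q : ℕ} (hq : q.Prime)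
    (hqz : q ∣ orderOf z) : q ∣ orderOf y := by
  by_contra hqy
  have hqy' : q.Coprime (orderOf y) := (Nat.Prime.coprime_iff_not_dvd hq).mpr hqy
  have hxy := orderOf_dvd_of_zpowers_le hlt.le
  have he : q * orderOf x ∣ orderOf z :=
    (hqy'.coprime_dvd_right hxy).mul_dvd_of_dvd_of_dvd hqz
      (hxy.trans (orderOf_dvd_of_zpowers_le hyz))
  -- an element of order `q * orderOf x` contains `x` but is comparable with `y` in neither direction
  set u := z ^ (orderOf z / (q * orderOf x))
  have hu : orderOf u = q * orderOf x := orderOf_pow_orderOf_div (orderOf_pos z).ne' he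
  have hxu : zpowers x ≤ zpowers u :=
    (zpowers_le_zpowers_iff_orderOf_dvd (zpowers_le.mp (hlt.le.trans hyz))
      (npow_mem_zpowers _ _)).mpr (by rw [hu]; exact dvd_mul_left _ _)
  rcases (hN ▸ Or.inr hxu : u ∈ closedPnbhd y) with huy | hyu
  · exact hqy ((hu ▸ dvd_mul_right q _).trans (orderOf_dvd_of_zpowers_le huy))
  · have hyx : orderOf y ∣ orderOf x :=
      hqy'.symm.dvd_of_dvd_mul_left (hu ▸ orderOf_dvd_of_zpowers_le hyu)
    exact hlt.not_ge ((zpowers_le_zpowers_iff_orderOf_dvd (mem_zpowers y)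
      (zpowers_le.mp hlt.le)).mpr hyx)

lemma isPrimePow_orderOf_of_closedPnbhd_eq (hnc : ¬IsCyclic G) {x y z : G}
    (hne : zpowers x ≠ zpowers y) (hN : closedPnbhd x = closedPnbhd y)
    (hxz : zpowers x ≤ zpowers z) (hyz : zpowers y ≤ zpowers z) : IsPrimePow (orderOf z) := by
  wlog hxy : zpowers x ≤ zpowers y generalizing x y
  · exact this hne.symm hN.symm hyz hxz
      ((hN ▸ mem_closedPnbhd_self y : y ∈ closedPnbhd x).resolve_right hxy)
  have hlt := lt_of_le_of_ne hxy hne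
  obtain ⟨p, ⟨hp, hpy⟩, huniq⟩ :=
    isPrimePow_iff_unique_prime_dvd.mp (isPrimePow_orderOf_of_lt_of_closedPnbhd_eq hnc hlt hN)
  exact isPrimePow_iff_unique_prime_dvd.mpr ⟨p, ⟨hp, hpy.trans (orderOf_dvd_of_zpowers_le hyz)⟩,
    fun q ⟨hq, hqz⟩ => huniq q ⟨hq, prime_dvd_orderOf_of_lt_of_closedPnbhd_eq hlt hN hyz hq hqz⟩⟩

lemma closedPnbhd_eq_of_le_of_le (hnc : ¬IsCyclic G) {x y z : G} (hxz : zpowers x ≤ zpowers z)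
    (hzy : zpowers z ≤ zpowers y) (hN : closedPnbhd x = closedPnbhd y) :
    closedPnbhd z = closedPnbhd x := by
  rcases (hxz.trans hzy).eq_or_lt with hxy | hxy
  · exact closedPnbhd_congr (le_antisymm (hxy ▸ hzy) hxz)
  ext w
  constructor
  · rintro (hwz | hzw)
    · exact hN ▸ Or.inl (hwz.trans hzy)
    · exact Or.inr (hxz.trans hzw)
  · rintro (hwx | hxw)
    · exact Or.inl (hwx.trans hxz)
    rcases (hN ▸ Or.inr hxw : w ∈ closedPnbhd y) with hwy | hyw
    · exact zpowers_le_or_le_of_isPrimePow (isPrimePow_orderOf_of_lt_of_closedPnbhd_eq hnc hxy hN)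
        (zpowers_le.mp hwy) (zpowers_le.mp hzy)
    · exact Or.inr (hzy.trans hyw)

lemma zpowers_lt_of_mem_twinClass (hnc : ¬IsCyclic G) {h k b : G}
    (hsub : zpowers h ≤ zpowers k) (hS : closedPnbhd h ≠ closedPnbhd k)
    (hb : b ∈ twinClass h) : zpowers b < zpowers k := by
  have hkb : k ∈ closedPnbhd b := (hb : closedPnbhd b = closedPnbhd h) ▸ Or.inr hsub
  refine lt_of_le_of_ne (hkb.resolve_left fun hkb' => hS ?_)
    fun hbk => hS (hb.symm.trans (closedPnbhd_congr hbk))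
  exact (closedPnbhd_eq_of_le_of_le hnc hsub hkb' hb.symm).symm

lemma ncard_twinClass_le_totient (hnc : ¬IsCyclic G) {h k : G} (hsub : zpowers h ≤ zpowers k)
    (hS : closedPnbhd h ≠ closedPnbhd k) : (twinClass h).ncard ≤ φ (orderOf k) := by
  have hlt := fun b => zpowers_lt_of_mem_twinClass hnc hsub hS (b := b)
  by_cases hgen : twinClass h ⊆ {x | zpowers x = zpowers h}
  · calc (twinClass h).ncard ≤ {x | zpowers x = zpowers h}.ncard := Set.ncard_le_ncard hgen
      _ = φ (orderOf h) := ncard_setOf_zpowers_eq_s13 h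
      _ ≤ φ (orderOf k) := Nat.le_of_dvd (totient_pos.mpr (orderOf_pos k))
          (totient_dvd_of_dvd (orderOf_dvd_of_zpowers_le hsub))
  obtain ⟨b, hb, hbh⟩ := Set.not_subset.mp hgen
  have hk : IsPrimePow (orderOf k) :=
    isPrimePow_orderOf_of_closedPnbhd_eq hnc hbh hb (hlt b hb).le (hlt h rfl).le
  have hgens : {x | zpowers x = zpowers k} ⊆ (zpowers k : Set G) :=
    fun x hx => (hx : zpowers x = zpowers k) ▸ mem_zpowers x
  calc (twinClass h).ncard ≤ ((zpowers k : Set G) \ {x | zpowers x = zpowers k}).ncard :=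
        Set.ncard_le_ncard fun b hb => ⟨zpowers_le.mp (hlt b hb).le, (hlt b hb).ne⟩
    _ = orderOf k - φ (orderOf k) := by
        rw [Set.ncard_sdiff hgens, ncard_setOf_zpowers_eq_s13, ← Nat.card_coe_set_eq,
          SetLike.coe_sort_coe, Nat.card_zpowers]
    _ ≤ φ (orderOf k) := by have := hk.le_two_mul_totient; omega

end PowerGraph

theorem stmt13 {G : Type*} [Group G] [Finite G] (hnc : ¬ IsCyclic G)
    (h k : G) (hsub : Subgroup.zpowers h ≤ Subgroup.zpowers k) :
    Ncount h ≤ Ncount k := by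
  rw [Ncount_eq_ncard_twinClass, Ncount_eq_ncard_twinClass]
  by_cases hS : closedPnbhd h = closedPnbhd k
  · simp only [twinClass, hS, le_refl]
  calc (twinClass h).ncard ≤ φ (orderOf k) := ncard_twinClass_le_totient hnc hsub hS
    _ = {x | zpowers x = zpowers k}.ncard := (ncard_setOf_zpowers_eq_s13 k).symm
    _ ≤ (twinClass k).ncard := Set.ncard_le_ncard fun x hx => closedPnbhd_congr hx
end

section
/- Let G be a finite non-cyclic group and a, b ∈ G distinct elements that are non-adjacent in the power graph P(G), with N_a = N_b = k. Then a and b are adjacent in the enhanced power graph P_e(G) if and only if there exists c ∈ G adjacent in P(G) to both a and b with N_c > k. -/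
namespace PGDIV
open Nat Finset

lemma chain_sum_le {Γ : Finset ℕ} {δ : ℕ} (hδ : 0 < δ) (hdvd : ∀ γ ∈ Γ, γ ∣ δ) (h1 : 1 ∉ Γ) :
    ∑ γ ∈ Γ, φ γ ≤ δ - 1 := by
  have hsub : Γ ⊆ δ.divisors.erase 1 := fun γ hγ => Finset.mem_erase.2
    ⟨fun h => h1 (h ▸ hγ), Nat.mem_divisors.2 ⟨hdvd γ hγ, hδ.ne'⟩⟩
  have h2 : ∑ γ ∈ Γ, φ γ ≤ ∑ γ ∈ δ.divisors.erase 1, φ γ :=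
    Finset.sum_le_sum_of_subset hsub
  have h3 : φ 1 + ∑ γ ∈ δ.divisors.erase 1, φ γ = ∑ γ ∈ δ.divisors, φ γ :=
    Finset.add_sum_erase _ φ (Nat.one_mem_divisors.2 hδ.ne')
  have h4 : ∑ γ ∈ δ.divisors, φ γ = δ := Nat.sum_totient δ
  have h5 : φ 1 = 1 := Nat.totient_one
  omega

lemma pair_struct {n γ δ : ℕ} (hγ1 : 1 < γ) (hγδ : γ ∣ δ) (hne : γ ≠ δ) (hδn : δ ∣ n)
    (hn : 0 < n)
    (hS : ∀ f, f ∣ n → ((f ∣ γ ∨ γ ∣ f) ↔ (f ∣ δ ∨ δ ∣ f))) :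
    ∃ p i j, p.Prime ∧ 0 < i ∧ i < j ∧ γ = p ^ i ∧ δ = p ^ j := by
  have hδ0 : 0 < δ := Nat.pos_of_dvd_of_pos hδn hn
  have hγ0 : 0 < γ := Nat.pos_of_dvd_of_pos hγδ hδ0
  have hprimes : ∀ q : ℕ, q.Prime → q ∣ δ → q ∣ γ := by
    intro q hq hqδ
    rcases (hS q (hqδ.trans hδn)).mpr (Or.inl hqδ) with h | h
    · exact h
    · rcases (Nat.Prime.eq_one_or_self_of_dvd hq γ h) with h1 | h1
      · omega
      · rw [h1]
  have htne : δ / γ ≠ 1 := fun h =>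
    hne (by rw [← Nat.div_mul_cancel hγδ, h, one_mul])
  have hp : (δ / γ).minFac.Prime := Nat.minFac_prime htne
  set p := (δ / γ).minFac
  have hγp : γ * p ∣ δ := (Nat.dvd_div_iff_mul_dvd hγδ).mp (Nat.minFac_dvd _)
  have hij : γ.factorization p < δ.factorization p := by
    have h1 : (γ * p).factorization p = γ.factorization p + 1 := by
      rw [Nat.factorization_mul hγ0.ne' hp.ne_zero, Finsupp.add_apply,
        Nat.Prime.factorization_self hp]
    have h2 := (Nat.factorization_le_iff_dvd (Nat.mul_ne_zero hγ0.ne' hp.ne_zero)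
      hδ0.ne').mpr hγp p
    omega
  have hfn : p ^ δ.factorization p ∣ n := (Nat.ordProj_dvd δ p).trans hδn
  have hγpj : γ ∣ p ^ δ.factorization p := by
    rcases (hS _ hfn).mpr (Or.inl (Nat.ordProj_dvd δ p)) with h | h
    · exfalso
      have := (Nat.Prime.pow_dvd_iff_le_factorization hp hγ0.ne').mp h
      omega
    · exact h
  obtain ⟨m, hm, hγm⟩ := (Nat.dvd_prime_pow hp).mp hγpj
  have him : γ.factorization p = m := by
    rw [hγm, Nat.Prime.factorization_pow hp, Finsupp.single_eq_same]
  have huniq : ∀ {q : ℕ}, q.Prime → q ∣ δ → q = p := by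
    intro q hq hqδ
    have h3 : q ∣ p ^ m := hγm ▸ hprimes q hq hqδ
    exact (Nat.prime_dvd_prime_iff_eq hq hp).mp (hq.dvd_of_dvd_pow h3)
  have hδpow : δ = p ^ δ.primeFactorsList.length :=
    Nat.eq_prime_pow_of_unique_prime_dvd hδ0.ne' huniq
  have hlen : δ.factorization p = δ.primeFactorsList.length := by
    conv_lhs => rw [hδpow]
    rw [Nat.Prime.factorization_pow hp, Finsupp.single_eq_same]
  have hm0 : m ≠ 0 := by
    intro h
    rw [h, pow_zero] at hγm
    omega
  exact ⟨p, m, δ.factorization p, hp, Nat.pos_of_ne_zero hm0, him ▸ hij, hγm,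
    by rw [hlen]; exact hδpow⟩

lemma core {n : ℕ} {Γ : Finset ℕ} (hn : 0 < n)
    (hdvd : ∀ γ ∈ Γ, γ ∣ n)
    (hchain : ∀ γ ∈ Γ, ∀ γ' ∈ Γ, γ ∣ γ' ∨ γ' ∣ γ)
    (hS : ∀ γ ∈ Γ, ∀ γ' ∈ Γ, ∀ f, f ∣ n → ((f ∣ γ ∨ γ ∣ f) → (f ∣ γ' ∨ γ' ∣ f)))
    (h1 : 1 ∉ Γ) (hnn : n ∉ Γ) (hcard : 2 ≤ Γ.card) :
    ∑ γ ∈ Γ, φ γ < φ n := by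
  have hne : Γ.Nonempty := Finset.card_pos.mp (by omega)
  set δ := Γ.max' hne with hδ_def
  set γ := Γ.min' hne with hγ_def
  have hδΓ : δ ∈ Γ := Γ.max'_mem hne
  have hγΓ : γ ∈ Γ := Γ.min'_mem hne
  have hpos : ∀ α ∈ Γ, 0 < α := fun α hα => Nat.pos_of_dvd_of_pos (hdvd α hα) hn
  have hlt : γ < δ := Finset.min'_lt_max'_of_card Γ (by omega)
  have hαδ : ∀ α ∈ Γ, α ∣ δ := by
    intro α hα
    rcases hchain α hα δ hδΓ with h | h
    · exact h
    · have := Nat.le_of_dvd (hpos α hα) h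
      have := Γ.le_max' α hα
      have : α = δ := by omega
      rw [this]
  have hγδ : γ ∣ δ := hαδ γ hγΓ
  have hγ1 : 1 < γ := by
    have := hpos γ hγΓ
    rcases Nat.lt_or_ge 1 γ with h | h
    · exact h
    · exfalso; apply h1; have : γ = 1 := by omega
      rwa [this] at hγΓ
  obtain ⟨p, i, j, hp, hi0, hij, hγpi, hδpj⟩ :=
    pair_struct hγ1 hγδ (by omega) (hdvd δ hδΓ) hn
      (fun f hf => ⟨hS γ hγΓ δ hδΓ f hf, hS δ hδΓ γ hγΓ f hf⟩)
  have hδ0 : 0 < δ := hpos δ hδΓ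
  have hsum : ∑ α ∈ Γ, φ α ≤ δ - 1 := chain_sum_le hδ0 hαδ h1
  have hp2 : 2 ≤ p := hp.two_le
  have hpj_pos : 0 < p ^ j := pow_pos (by omega) j
  -- now compare δ - 1 = p^j - 1 with φ n
  have hjJ : j ≤ n.factorization p := by
    apply (Nat.Prime.pow_dvd_iff_le_factorization hp hn.ne').mp
    rw [← hδpj]; exact hdvd δ hδΓ
  suffices h : p ^ j ≤ φ n by rw [hδpj] at hsum; omega
  rcases Nat.lt_or_ge j (n.factorization p) with hcase | hcase
  · -- p^(j+1) divides n
    have hdvd1 : p ^ (j + 1) ∣ n :=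
      (Nat.Prime.pow_dvd_iff_le_factorization hp hn.ne').mpr (by omega)
    have h2 : φ (p ^ (j + 1)) ≤ φ n :=
      Nat.le_of_dvd (Nat.totient_pos.mpr hn) (Nat.totient_dvd_of_dvd hdvd1)
    have h3 : φ (p ^ (j + 1)) = p ^ j * (p - 1) := by
      rw [Nat.totient_prime_pow hp (by omega), Nat.add_sub_cancel]
    have h4 : p ^ j * 1 ≤ p ^ j * (p - 1) := Nat.mul_le_mul_left _ (by omega)
    omega
  · -- exact power: n = p^j * u
    have hJ : n.factorization p = j := by omega
    set u := n / p ^ j with hu_def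
    have hun : p ^ j * u = n := by
      rw [hu_def, ← hJ]
      exact Nat.ordProj_mul_ordCompl_eq_self n p
    have hpu : ¬ p ∣ u := by
      rw [hu_def, ← hJ]
      exact Nat.not_dvd_ordCompl hp hn.ne'
    have hu0 : 0 < u := by
      rcases Nat.eq_zero_or_pos u with h | h
      · rw [h, mul_zero] at hun; omega
      · exact h
    have hcop : Nat.Coprime (p ^ j) u :=
      Nat.Coprime.pow_left _ ((Nat.Prime.coprime_iff_not_dvd hp).mpr hpu)
    have hj1 : 1 ≤ j := by omega
    have hφpj : φ (p ^ j) = p ^ (j - 1) * (p - 1) := Nat.totient_prime_pow hp hj1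
    have hppow : p ^ j = p ^ (j-1) * p := by
      rw [← pow_succ]
      congr 1
      omega
    -- case on u
    rcases Nat.lt_or_ge u 3 with hu3 | hu3
    · interval_cases u
      · -- u = 1 : n = p ^ j = δ ∈ Γ, contradiction
        exfalso
        apply hnn
        have : n = δ := by omega
        rwa [this]
      · -- u = 2 : p odd, contradiction via f = 2 * p^(j-1)
        exfalso
        have hpne2 : p ≠ 2 := by
          intro h
          apply hpu
          rw [h]
        have hpodd : ¬ 2 ∣ p ^ j := by
          intro h
          have := Nat.Prime.dvd_of_dvd_pow Nat.prime_two h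
          have := (Nat.prime_dvd_prime_iff_eq Nat.prime_two hp).mp this
          omega
        have hfn2 : 2 * p ^ (j - 1) ∣ n := by
          rw [← hun, mul_comm (p^j) 2]
          exact Nat.mul_dvd_mul_left 2 (pow_dvd_pow p (by omega))
        have hcompγ : (2 * p ^ (j-1)) ∣ γ ∨ γ ∣ 2 * p ^ (j-1) := by
          right
          rw [hγpi]
          exact Dvd.dvd.mul_left (pow_dvd_pow p (by omega)) 2
        rcases hS γ hγΓ δ hδΓ _ hfn2 hcompγ with h | h
        · -- 2 * p^(j-1) ∣ p^j : 2 ∣ p^j, contra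
          rw [hδpj] at h
          exact hpodd ((dvd_mul_right 2 _).trans h)
        · -- p^j ∣ 2*p^(j-1)
          rw [hδpj] at h
          have h5 : p ^ j ∣ p ^ (j-1) := (Nat.Coprime.dvd_of_dvd_mul_left
            (Nat.Coprime.pow_left _ ((Nat.coprime_primes hp Nat.prime_two).mpr hpne2)) h)
          have := Nat.le_of_dvd (pow_pos (by omega) _) h5
          have := Nat.pow_lt_pow_right (by omega : 1 < p) (by omega : j - 1 < j)
          omega
    · -- u ≥ 3 : φ n = φ(p^j) φ(u) ≥ 2 φ(p^j) ≥ p^j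
      have hφn : φ n = φ (p ^ j) * φ u := by rw [← hun, Nat.totient_mul hcop]
      have hφu : 2 ≤ φ u := by
        have h6 : φ u ≠ 1 := by
          intro h
          rcases Nat.totient_eq_one_iff.mp h with h' | h' <;> omega
        have h7 : 0 < φ u := Nat.totient_pos.mpr hu0
        omega
      have h8 : p ^ (j-1) * (p-1) * 2 ≥ p ^ (j-1) * p := by
        have : (p - 1) * 2 ≥ p := by omega
        calc p ^ (j-1) * (p-1) * 2 = p ^ (j-1) * ((p-1) * 2) := by ring
          _ ≥ p ^ (j-1) * p := Nat.mul_le_mul_left _ this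
      calc p ^ j = p ^ (j-1) * p := hppow
        _ ≤ p ^ (j-1) * (p-1) * 2 := h8
        _ ≤ φ (p ^ j) * φ u := by rw [hφpj]; exact Nat.mul_le_mul_left _ hφu
        _ = φ n := hφn.symm

lemma div1 {n : ℕ} {Γ : Finset ℕ} (hn : 0 < n) (hne : Γ.Nonempty)
    (hdvd : ∀ γ ∈ Γ, γ ∣ n)
    (hchain : ∀ γ ∈ Γ, ∀ γ' ∈ Γ, γ ∣ γ' ∨ γ' ∣ γ)
    (hS : ∀ γ ∈ Γ, ∀ γ' ∈ Γ, ∀ f, f ∣ n → ((f ∣ γ ∨ γ ∣ f) → (f ∣ γ' ∨ γ' ∣ f)))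
    (hnn : n ∉ Γ) :
    ∑ γ ∈ Γ, φ γ ≤ φ n := by
  have hφn : 0 < φ n := Nat.totient_pos.mpr hn
  rcases Nat.lt_or_ge Γ.card 2 with hcard | hcard
  · -- singleton
    have h1 : Γ.card = 1 := by
      have := Finset.card_pos.mpr hne
      omega
    obtain ⟨α, hα⟩ := Finset.card_eq_one.mp h1
    subst hα
    rw [Finset.sum_singleton]
    exact Nat.le_of_dvd hφn (Nat.totient_dvd_of_dvd (hdvd α (Finset.mem_singleton_self α)))
  · by_cases h1 : 1 ∈ Γ
    · -- contains 1: n is a prime power case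
      set δ := Γ.max' hne with hδ_def
      have hδΓ : δ ∈ Γ := Γ.max'_mem hne
      have hpos : ∀ α ∈ Γ, 0 < α := fun α hα => Nat.pos_of_dvd_of_pos (hdvd α hα) hn
      have hαδ : ∀ α ∈ Γ, α ∣ δ := by
        intro α hα
        rcases hchain α hα δ hδΓ with h | h
        · exact h
        · have := Nat.le_of_dvd (hpos α hα) h
          have := Γ.le_max' α hα
          have : α = δ := by omega
          rw [this]
      have hδn : δ ∣ n := hdvd δ hδΓ
      have hδ0 : 0 < δ := hpos δ hδΓ
      have hδ1 : 1 < δ := by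
        rcases Nat.lt_or_ge 1 δ with h | h
        · exact h
        · exfalso
          have : ∀ α ∈ Γ, α = 1 := by
            intro α hα
            have := hpos α hα
            have := Nat.le_of_dvd hδ0 (hαδ α hα)
            omega
          have : Γ ⊆ {1} := fun α hα => Finset.mem_singleton.mpr (this α hα)
          have := Finset.card_le_card this
          simp at this
          omega
      have hδne : δ ≠ n := fun h => hnn (h ▸ hδΓ)
      -- comparability of every divisor f of n with δ
      have hcompδ : ∀ f, f ∣ n → (f ∣ δ ∨ δ ∣ f) :=
        fun f hf => hS 1 h1 δ hδΓ f hf (Or.inr (one_dvd f))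
      -- find prime r with v_r(δ) < v_r(n), δ = r^s
      obtain ⟨r, s, V, hr, hs0, hsV, hδrs, hnrV⟩ :
          ∃ r s V, r.Prime ∧ 0 < s ∧ s < V ∧ δ = r ^ s ∧ n = r ^ V := by
        -- mimic pair_struct with γ := δ, δ := n
        have hSn : ∀ f, f ∣ n → ((f ∣ δ ∨ δ ∣ f) ↔ (f ∣ n ∨ n ∣ f)) :=
          fun f hf => ⟨fun _ => Or.inl hf, fun _ => hcompδ f hf⟩
        obtain ⟨p, i, j, hp, hi0, hij, h1', h2'⟩ := pair_struct hδ1 hδn hδne dvd_rfl hn hSn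
        exact ⟨p, i, j, hp, hi0, hij, h1', h2'⟩
      -- sum ≤ δ
      have hsum : ∑ α ∈ Γ, φ α ≤ δ := by
        have hsub : Γ ⊆ δ.divisors := fun α hα =>
          Nat.mem_divisors.2 ⟨hαδ α hα, hδ0.ne'⟩
        calc ∑ α ∈ Γ, φ α ≤ ∑ α ∈ δ.divisors, φ α := Finset.sum_le_sum_of_subset hsub
          _ = δ := Nat.sum_totient δ
      have hr2 : 2 ≤ r := hr.two_le
      have hV1 : 1 ≤ V := by omega
      have hφnval : φ n = r ^ (V - 1) * (r - 1) := by
        rw [hnrV]; exact Nat.totient_prime_pow hr hV1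
      have hstep : r ^ s ≤ r ^ (V - 1) := Nat.pow_le_pow_right (by omega) (by omega)
      have hstep2 : r ^ (V-1) * 1 ≤ r ^ (V - 1) * (r - 1) := Nat.mul_le_mul_left _ (by omega)
      omega
    · exact le_of_lt (core hn hdvd hchain hS h1 hnn hcard)

lemma totient_proper_dvd {d L : ℕ} (hL : 0 < L) (hdL : d ∣ L) (hne : d ≠ L)
    (hφ : φ d = φ L) : L = 2 * d ∧ ¬ 2 ∣ d := by
  have hd0 : 0 < d := Nat.pos_of_dvd_of_pos hdL hL
  have hφd : 0 < φ d := Nat.totient_pos.mpr hd0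
  -- step 1
  have step : ∀ M : ℕ, 0 < M → d ∣ M → d ≠ M → φ d = φ M →
      (2 ∣ M ∧ ¬ 2 ∣ M / 2 ∧ d ∣ M / 2 ∧ φ (M / 2) = φ d) := by
    intro M hM hdM hneM hφM
    have htne : M / d ≠ 1 := by
      intro h
      apply hneM
      have := Nat.div_mul_cancel hdM
      rw [h, one_mul] at this
      omega
    obtain ⟨p, hpdef⟩ : ∃ p, p = (M / d).minFac := ⟨_, rfl⟩
    have hp : p.Prime := hpdef ▸ Nat.minFac_prime htne
    have hdp : d * p ∣ M := (Nat.dvd_div_iff_mul_dvd hdM).mp (hpdef ▸ Nat.minFac_dvd _)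
    have hpM : p ∣ M := hpdef ▸ ((Nat.minFac_dvd _).trans (Nat.div_dvd_of_dvd hdM))
    have hdMp : d ∣ M / p := by
      rw [Nat.dvd_div_iff_mul_dvd hpM, mul_comm]
      exact hdp
    have hMp0 : 0 < M / p := Nat.div_pos (Nat.le_of_dvd hM hpM) hp.pos
    have hMeq : p * (M / p) = M := Nat.mul_div_cancel' hpM
    have hφle : φ d ≤ φ (M / p) :=
      Nat.le_of_dvd (Nat.totient_pos.mpr hMp0) (Nat.totient_dvd_of_dvd hdMp)
    by_cases h2 : p ∣ M / p
    · exfalso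
      have hv : φ M = p * φ (M / p) := by
        have := Nat.totient_mul_of_prime_of_dvd hp h2
        rwa [hMeq] at this
      have := hp.two_le
      nlinarith
    · have hφMval : φ M = (p - 1) * φ (M / p) := by
        have := Nat.totient_mul_of_prime_of_not_dvd hp h2
        rwa [hMeq] at this
      have hp2 : p = 2 := by
        by_contra hne2
        have h3 : 3 ≤ p := by have := hp.two_le; omega
        have h4 : 2 * φ (M / p) ≤ (p - 1) * φ (M / p) :=
          Nat.mul_le_mul_right _ (by omega)
        omega
      subst hp2
      refine ⟨hpM, h2, hdMp, ?_⟩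
      omega
  obtain ⟨h2M, h2M2, hdM2, hφM2⟩ := step L hL hdL hne hφ
  have hL2 : 0 < L / 2 := Nat.div_pos (Nat.le_of_dvd hL h2M) (by omega)
  by_cases hcase : d = L / 2
  · constructor
    · rw [hcase]
      omega
    · rw [hcase]
      exact h2M2
  · exfalso
    obtain ⟨h2', _, _, _⟩ := step (L / 2) hL2 hdM2 hcase hφM2.symm
    exact h2M2 h2'

lemma div2 {l n m : ℕ} {A B : Finset ℕ} (hl : 0 < l)
    (hAd : ∀ γ ∈ A, γ ∣ l) (hBd : ∀ γ ∈ B, γ ∣ l)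
    (hAchain : ∀ γ ∈ A, ∀ γ' ∈ A, γ ∣ γ' ∨ γ' ∣ γ)
    (hBchain : ∀ γ ∈ B, ∀ γ' ∈ B, γ ∣ γ' ∨ γ' ∣ γ)
    (hSA : ∀ γ ∈ A, ∀ γ' ∈ A, ∀ f, f ∣ l → ((f ∣ γ ∨ γ ∣ f) → (f ∣ γ' ∨ γ' ∣ f)))
    (hSB : ∀ γ ∈ B, ∀ γ' ∈ B, ∀ f, f ∣ l → ((f ∣ γ ∨ γ ∣ f) → (f ∣ γ' ∨ γ' ∣ f)))
    (hnA : n ∈ A) (hmB : m ∈ B) (hnm : ¬ n ∣ m) (hmn : ¬ m ∣ n)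
    (heq : ∑ γ ∈ A, φ γ = ∑ γ ∈ B, φ γ) :
    ∑ γ ∈ A, φ γ < φ l := by
  have hnl : n ∣ l := hAd n hnA
  have hml : m ∣ l := hBd m hmB
  have hφl : 0 < φ l := Nat.totient_pos.mpr hl
  have h1A : (1:ℕ) ∉ A := by
    intro h
    rcases hSA 1 h n hnA m hml (Or.inr (one_dvd m)) with h' | h'
    · exact hmn h'
    · exact hnm h'
  have h1B : (1:ℕ) ∉ B := by
    intro h
    rcases hSB 1 h m hmB n hnl (Or.inr (one_dvd n)) with h' | h'
    · exact hnm h'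
    · exact hmn h'
  have hlA : l ∉ A := by
    intro h
    rcases hSA l h n hnA m hml (Or.inl hml) with h' | h'
    · exact hmn h'
    · exact hnm h'
  have hlB : l ∉ B := by
    intro h
    rcases hSB l h m hmB n hnl (Or.inl hnl) with h' | h'
    · exact hnm h'
    · exact hmn h'
  rcases Nat.lt_or_ge A.card 2 with hcA | hcA
  · have hA1 : A.card = 1 := by
      have := Finset.card_pos.mpr ⟨n, hnA⟩
      omega
    obtain ⟨α, hα⟩ := Finset.card_eq_one.mp hA1
    have hA : A = {n} := by
      rw [hα]
      congr 1
      exact (Finset.mem_singleton.mp (hα ▸ hnA)).symm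
    rw [hA, Finset.sum_singleton] at heq ⊢
    rcases Nat.lt_or_ge B.card 2 with hcB | hcB
    · have hB1 : B.card = 1 := by
        have := Finset.card_pos.mpr ⟨m, hmB⟩
        omega
      obtain ⟨β, hβ⟩ := Finset.card_eq_one.mp hB1
      have hB : B = {m} := by
        rw [hβ]
        congr 1
        exact (Finset.mem_singleton.mp (hβ ▸ hmB)).symm
      rw [hB, Finset.sum_singleton] at heq
      -- φ n = φ m; show φ n < φ l
      by_contra hcon
      push_neg at hcon
      have hn_ne_l : n ≠ l := fun h => hlA (h ▸ hnA)
      have hm_ne_l : m ≠ l := fun h => hlB (h ▸ hmB)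
      have hφn_le : φ n ≤ φ l := Nat.le_of_dvd hφl (Nat.totient_dvd_of_dvd hnl)
      have hφn_eq : φ n = φ l := by omega
      have hφm_eq : φ m = φ l := by omega
      obtain ⟨he1, _⟩ := totient_proper_dvd hl hnl hn_ne_l hφn_eq
      obtain ⟨he2, _⟩ := totient_proper_dvd hl hml hm_ne_l hφm_eq
      have : n = m := by omega
      exact hnm (this ▸ dvd_rfl)
    · rw [heq]
      exact core hl hBd hBchain hSB h1B hlB hcB
  · exact core hl hAd hAchain hSA h1A hlA hcA

end PGDIV

set_option linter.unusedSectionVars false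
namespace PGTHM
open Subgroup

variable {G : Type*} [Group G]

/-- comparability of cyclic subgroups -/
def ccmp (x y : G) : Prop := zpowers x ≤ zpowers y ∨ zpowers y ≤ zpowers x

lemma ccmp_refl (x : G) : ccmp x x := Or.inl le_rfl

lemma ccmp_symm {x y : G} (h : ccmp x y) : ccmp y x := h.symm

lemma padj_iff {x y : G} : padj x y ↔ x ≠ y ∧ ccmp x y := Iff.rfl

/-- the closed twin class of c -/
def Tbar (c : G) : Set G := {z | ∀ x, ccmp z x ↔ ccmp c x}

lemma mem_Tbar_self (c : G) : c ∈ Tbar c := fun _ => Iff.rfl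

lemma Tbar_ccmp {c z : G} (hz : z ∈ Tbar c) (x : G) : ccmp z x ↔ ccmp c x := hz x

lemma mem_Tbar_of_zpowers_eq {c x z : G} (hz : z ∈ Tbar c) (h : zpowers x = zpowers z) :
    x ∈ Tbar c := by
  intro w
  rw [← hz w]
  unfold ccmp
  rw [h]

lemma closedTwins_eq (c : G) : closedTwins c = Tbar c \ {c} := by
  ext z
  constructor
  · rintro ⟨⟨hne, hcmp⟩, hset⟩
    have hcmp' : ccmp c z := hcmp
    refine ⟨?_, fun h => hne ((Set.mem_singleton_iff.mp h).symm)⟩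
    intro x
    by_cases hxz : x = z
    · subst hxz
      exact iff_of_true (ccmp_refl x) hcmp'
    · by_cases hxc : x = c
      · subst hxc
        exact iff_of_true (ccmp_symm hcmp') (ccmp_refl x)
      · constructor
        · intro hzx
          have hx1 : x ∈ pnbhd z \ {c} := ⟨⟨fun h => hxz h.symm, hzx⟩, hxc⟩
          rw [← hset] at hx1
          exact hx1.1.2
        · intro hcx
          have hx1 : x ∈ pnbhd c \ {z} := ⟨⟨fun h => hxc h.symm, hcx⟩, hxz⟩
          rw [hset] at hx1
          exact hx1.1.2
  · rintro ⟨hprof, hne⟩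
    have hne' : z ≠ c := hne
    have hcz : ccmp c z := (hprof z).mp (ccmp_refl z)
    refine ⟨⟨fun h => hne' h.symm, hcz⟩, ?_⟩
    ext x
    constructor
    · rintro ⟨⟨hne1, hcmp1⟩, hne2⟩
      have hne2' : x ≠ z := hne2
      exact ⟨⟨fun h => hne2' h.symm, (hprof x).mpr hcmp1⟩,
        fun h => hne1 ((Set.mem_singleton_iff.mp h).symm)⟩
    · rintro ⟨⟨hne1, hcmp1⟩, hne2⟩
      have hne2' : x ≠ c := hne2
      exact ⟨⟨fun h => hne2' h.symm, (hprof x).mp hcmp1⟩,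
        fun h => hne1 ((Set.mem_singleton_iff.mp h).symm)⟩

lemma ncount_eq [Finite G] (c : G) : Ncount c = (Tbar c).ncard := by
  have h1 : Tbar c = insert c (closedTwins c) := by
    rw [closedTwins_eq, Set.insert_diff_singleton, Set.insert_eq_self.mpr (mem_Tbar_self c)]
  have h2 : c ∉ closedTwins c := by
    rw [closedTwins_eq]
    exact fun h => h.2 rfl
  rw [Ncount, h1, Set.ncard_insert_of_notMem h2 (Set.toFinite _)]

section Cyclic

variable [Finite G]

lemma exists_pow_eq {a x : G} (h : x ∈ zpowers a) : ∃ i : ℕ, a ^ i = x := by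
  have := mem_powers_iff_mem_zpowers.mpr h
  exact (Submonoid.mem_powers_iff x a).mp this

lemma pow_gcd_mem (a : G) (i : ℕ) :
    a ^ ((orderOf a).gcd i) ∈ zpowers (a ^ i) := by
  have hb := Nat.gcd_eq_gcd_ab (orderOf a) i
  have h1 : (a : G) ^ (((orderOf a).gcd i : ℤ)) = (a ^ i) ^ (Nat.gcdB (orderOf a) i) := by
    rw [hb, zpow_add, zpow_mul, zpow_mul]
    have h2 : (a : G) ^ ((orderOf a : ℤ)) = 1 := by
      rw [zpow_natCast, pow_orderOf_eq_one]
    rw [h2, one_zpow, one_mul, zpow_natCast]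
  have h3 : a ^ ((orderOf a).gcd i) = (a ^ i) ^ (Nat.gcdB (orderOf a) i) := by
    rw [← h1, zpow_natCast]
  rw [h3]
  exact zpow_mem (mem_zpowers _) _

lemma zpowers_pow_gcd (a : G) (i : ℕ) :
    zpowers (a ^ i) = zpowers (a ^ ((orderOf a).gcd i)) := by
  apply le_antisymm
  · rw [zpowers_le]
    obtain ⟨t, ht⟩ := Nat.gcd_dvd_right (orderOf a) i
    have h4 : a ^ i = (a ^ ((orderOf a).gcd i)) ^ t := by rw [← pow_mul, ← ht]
    rw [h4]
    exact Subgroup.pow_mem _ (mem_zpowers _) _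
  · rw [zpowers_le]
    exact pow_gcd_mem a i

/-- normal form: every element of ⟨a⟩ generates the same subgroup as a canonical power -/
lemma zpowers_eq_norm {a x : G} (h : x ∈ zpowers a) :
    zpowers x = zpowers (a ^ (orderOf a / orderOf x)) := by
  obtain ⟨i, rfl⟩ := exists_pow_eq h
  have hg : (orderOf a).gcd i ∣ orderOf a := Nat.gcd_dvd_left _ _
  have hn0 : orderOf a ≠ 0 := (orderOf_pos a).ne'
  have hord : orderOf (a ^ i) = orderOf a / (orderOf a).gcd i := orderOf_pow a
  rw [hord, Nat.div_div_self hg hn0]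
  exact zpowers_pow_gcd a i

lemma orderOf_pow_div {a : G} {d : ℕ} (hd : d ∣ orderOf a) :
    orderOf (a ^ (orderOf a / d)) = d := by
  have hn0 : orderOf a ≠ 0 := (orderOf_pos a).ne'
  have h1 : (orderOf a).gcd (orderOf a / d) = orderOf a / d := by
    rw [Nat.gcd_comm]
    exact Nat.gcd_eq_left (Nat.div_dvd_of_dvd hd)
  rw [orderOf_pow a, h1, Nat.div_div_self hd hn0]

lemma zpowers_le_iff_orderOf_dvd {a x y : G} (hx : x ∈ zpowers a) (hy : y ∈ zpowers a) :
    zpowers x ≤ zpowers y ↔ orderOf x ∣ orderOf y := by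
  constructor
  · intro h
    have := Subgroup.card_dvd_of_le h
    rwa [Nat.card_zpowers, Nat.card_zpowers] at this
  · intro h
    have hdx : orderOf x ∣ orderOf a := orderOf_dvd_of_mem_zpowers hx
    have hdy : orderOf y ∣ orderOf a := orderOf_dvd_of_mem_zpowers hy
    rw [zpowers_eq_norm hx, zpowers_eq_norm hy, zpowers_le]
    -- a ^ (n / dx) ∈ zpowers (a ^ (n / dy)) since (n / dy) ∣ (n / dx)
    have hdvd : (orderOf a / orderOf y) ∣ (orderOf a / orderOf x) := by
      obtain ⟨s, hs⟩ := h
      obtain ⟨t, ht⟩ := hdy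
      have hx0 : 0 < orderOf x := orderOf_pos x
      have hy0 : 0 < orderOf y := orderOf_pos y
      have ha0 : 0 < orderOf a := orderOf_pos a
      refine ⟨s, ?_⟩
      have h1 : orderOf a / orderOf y = t := by rw [ht, Nat.mul_div_cancel_left _ hy0]
      have h2 : orderOf a / orderOf x = t * s := by
        have : orderOf a = orderOf x * (s * t) := by rw [ht, hs]; ring
        rw [this, Nat.mul_div_cancel_left _ hx0]
        ring
      rw [h1, h2]
    obtain ⟨k, hk⟩ := hdvd
    have h5 : a ^ (orderOf a / orderOf x) = (a ^ (orderOf a / orderOf y)) ^ k := by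
      rw [← pow_mul, ← hk]
    rw [h5]
    exact Subgroup.pow_mem _ (mem_zpowers _) _

lemma zpowers_eq_of_orderOf_eq {a x y : G} (hx : x ∈ zpowers a) (hy : y ∈ zpowers a)
    (h : orderOf x = orderOf y) : zpowers x = zpowers y :=
  le_antisymm ((zpowers_le_iff_orderOf_dvd hx hy).mpr (h ▸ dvd_rfl))
    ((zpowers_le_iff_orderOf_dvd hy hx).mpr (h ▸ dvd_rfl))

lemma card_orderOf_eq {a : G} {d : ℕ} (hd : d ∣ orderOf a) :
    {x : G | x ∈ zpowers a ∧ orderOf x = d}.ncard = Nat.totient d := by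
  classical
  have hcyc : IsCyclic (zpowers a) := by
    refine ⟨⟨a, mem_zpowers a⟩, ?_⟩
    rintro ⟨x, hx⟩
    obtain ⟨k, hk⟩ := hx
    exact ⟨k, by ext; simpa using hk⟩
  cases nonempty_fintype (zpowers a)
  have hcard : Fintype.card (zpowers a) = orderOf a := by
    rw [← Nat.card_eq_fintype_card, Nat.card_zpowers]
  have hcount := IsCyclic.card_orderOf_eq_totient (α := zpowers a) (d := d)
    (by rw [hcard]; exact hd)
  have himg : {x : G | x ∈ zpowers a ∧ orderOf x = d} =
      Subtype.val '' {h : zpowers a | orderOf h = d} := by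
    ext x
    constructor
    · rintro ⟨hx, hox⟩
      exact ⟨⟨x, hx⟩, by rwa [Set.mem_setOf_eq, orderOf_mk], rfl⟩
    · rintro ⟨⟨y, hy⟩, hoy, rfl⟩
      exact ⟨hy, by rw [Set.mem_setOf_eq, orderOf_mk] at hoy; exact hoy⟩
  rw [himg, Set.ncard_image_of_injective _ Subtype.val_injective,
    Set.ncard_eq_toFinset_card', Set.toFinset_setOf]
  exact hcount

lemma card_gen {a : G} : {x : G | zpowers x = zpowers a}.ncard = Nat.totient (orderOf a) := by
  have h : {x : G | zpowers x = zpowers a} = {x : G | x ∈ zpowers a ∧ orderOf x = orderOf a} := by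
    ext x
    constructor
    · intro hx
      have hmem : x ∈ zpowers a := hx ▸ mem_zpowers x
      have : orderOf x = orderOf a := by
        rw [← Nat.card_zpowers, ← Nat.card_zpowers, hx]
      exact ⟨hmem, this⟩
    · rintro ⟨hmem, hord⟩
      exact zpowers_eq_of_orderOf_eq hmem (mem_zpowers a) hord
  rw [h]
  exact card_orderOf_eq dvd_rfl

lemma ncount_ge (c : G) : Nat.totient (orderOf c) ≤ Ncount c := by
  rw [ncount_eq, ← card_gen]
  apply Set.ncard_le_ncard _ (Set.toFinite _)
  intro x hx
  exact mem_Tbar_of_zpowers_eq (mem_Tbar_self c) (hx.trans rfl)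

lemma tbar_card (a c : G) (hsub : ∀ z ∈ Tbar c, z ∈ zpowers a) :
    ∃ Γ : Finset ℕ,
      (∀ γ ∈ Γ, ∃ z, z ∈ Tbar c ∧ orderOf z = γ) ∧
      (∀ z ∈ Tbar c, orderOf z ∈ Γ) ∧
      (Tbar c).ncard = ∑ γ ∈ Γ, Nat.totient γ := by
  classical
  cases nonempty_fintype G
  refine ⟨(Tbar c).toFinset.image orderOf, ?_, ?_, ?_⟩
  · intro γ hγ
    obtain ⟨z, hz, rfl⟩ := Finset.mem_image.mp hγ
    exact ⟨z, Set.mem_toFinset.mp hz, rfl⟩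
  · intro z hz
    exact Finset.mem_image_of_mem _ (Set.mem_toFinset.mpr hz)
  · rw [Set.ncard_eq_toFinset_card', Finset.card_eq_sum_card_image orderOf]
    apply Finset.sum_congr rfl
    intro γ hγ
    obtain ⟨z, hzmem, hzord⟩ := Finset.mem_image.mp hγ
    have hz : z ∈ Tbar c := Set.mem_toFinset.mp hzmem
    have hd : γ ∣ orderOf a := hzord ▸ orderOf_dvd_of_mem_zpowers (hsub z hz)
    have hseteq : {x : G | x ∈ zpowers a ∧ orderOf x = γ} =
        (((Tbar c).toFinset.filter (fun x => orderOf x = γ) : Finset G) : Set G) := by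
      ext x
      simp only [Set.mem_setOf_eq, Finset.coe_filter, Set.mem_toFinset]
      constructor
      · rintro ⟨hxa, hxo⟩
        have hzz : zpowers x = zpowers z :=
          zpowers_eq_of_orderOf_eq hxa (hsub z hz) (hxo.trans hzord.symm)
        exact ⟨mem_Tbar_of_zpowers_eq hz hzz, hxo⟩
      · rintro ⟨hxT, hxo⟩
        exact ⟨hsub x hxT, hxo⟩
    have hcnt := card_orderOf_eq (a := a) hd
    rw [hseteq, Set.ncard_coe_finset] at hcnt
    exact hcnt

lemma ccmp_in_Tbar {c : G} {z z' : G} (hz : z ∈ Tbar c) (hz' : z' ∈ Tbar c) : ccmp z z' := by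
  have h1 : ccmp z c := (hz c).mpr (ccmp_refl c)
  exact ccmp_symm ((hz' z).mpr (ccmp_symm h1))

lemma main_le {a b c : G} (hcmp : ¬ ccmp a b)
    (hsub : ∀ z ∈ Tbar c, zpowers z ≤ zpowers a ∧ zpowers z ≤ zpowers b) :
    Ncount c ≤ Ncount a := by
  have hmem : ∀ z ∈ Tbar c, z ∈ zpowers a := fun z hz => (hsub z hz).1 (mem_zpowers z)
  obtain ⟨Γ, hwit, hall, hcount⟩ := tbar_card a c hmem
  have hφ : Nat.totient (orderOf a) ≤ Ncount a := ncount_ge a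
  have h1 : ∑ γ ∈ Γ, Nat.totient γ ≤ Nat.totient (orderOf a) := by
    apply PGDIV.div1 (orderOf_pos a) ⟨orderOf c, hall c (mem_Tbar_self c)⟩
    · intro γ hγ
      obtain ⟨z, hz, rfl⟩ := hwit γ hγ
      exact orderOf_dvd_of_mem_zpowers (hmem z hz)
    · intro γ hγ γ' hγ'
      obtain ⟨z, hz, rfl⟩ := hwit γ hγ
      obtain ⟨z', hz', rfl⟩ := hwit γ' hγ'
      rcases ccmp_in_Tbar hz hz' with h | h
      · exact Or.inl ((zpowers_le_iff_orderOf_dvd (hmem z hz) (hmem z' hz')).mp h)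
      · exact Or.inr ((zpowers_le_iff_orderOf_dvd (hmem z' hz') (hmem z hz)).mp h)
    · intro γ hγ γ' hγ' f hf hfc
      obtain ⟨z, hz, rfl⟩ := hwit γ hγ
      obtain ⟨z', hz', rfl⟩ := hwit γ' hγ'
      set y := a ^ (orderOf a / f) with hy_def
      have hya : y ∈ zpowers a := Subgroup.pow_mem _ (mem_zpowers a) _
      have hyo : orderOf y = f := orderOf_pow_div hf
      have hccyz : ccmp y z := by
        rcases hfc with h | h
        · exact Or.inl ((zpowers_le_iff_orderOf_dvd hya (hmem z hz)).mpr (by rw [hyo]; exact h))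
        · exact Or.inr ((zpowers_le_iff_orderOf_dvd (hmem z hz) hya).mpr (by rw [hyo]; exact h))
      have hccyz' : ccmp z' y := (hz' y).mpr ((hz y).mp (ccmp_symm hccyz))
      rcases hccyz' with h | h
      · exact Or.inr (hyo ▸ ((zpowers_le_iff_orderOf_dvd (hmem z' hz') hya).mp h))
      · exact Or.inl (hyo ▸ ((zpowers_le_iff_orderOf_dvd hya (hmem z' hz')).mp h))
    · intro hcon
      obtain ⟨z, hz, hzo⟩ := hwit (orderOf a) hcon
      have : zpowers z = zpowers a :=
        zpowers_eq_of_orderOf_eq (hmem z hz) (mem_zpowers a) (hzo.trans rfl)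
      exact hcmp (Or.inl (this ▸ (hsub z hz).2))
  rw [ncount_eq, hcount]
  omega

lemma Tbar_subset_zpowers {a b c : G} (hcmp : ¬ ccmp a b)
    (ha : a ∈ zpowers c) (hb : b ∈ zpowers c) :
    ∀ z ∈ Tbar a, z ∈ zpowers c := by
  intro z hz
  have hccz : ccmp z c := (hz c).mpr (Or.inl (zpowers_le.mpr ha))
  rcases hccz with h | h
  · exact h (mem_zpowers z)
  · exfalso
    have hbz : b ∈ zpowers z := h hb
    exact hcmp ((hz b).mp (Or.inr (zpowers_le.mpr hbz)))

lemma main_lt {a b c : G} (hcmp : ¬ ccmp a b) (ha : a ∈ zpowers c) (hb : b ∈ zpowers c)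
    (heq : Ncount a = Ncount b) : Ncount a < Ncount c := by
  have hcmp' : ¬ ccmp b a := fun h => hcmp (ccmp_symm h)
  have hsubA := Tbar_subset_zpowers hcmp ha hb
  have hsubB := Tbar_subset_zpowers hcmp' hb ha
  obtain ⟨A, hAwit, hAall, hAcount⟩ := tbar_card c a hsubA
  obtain ⟨B, hBwit, hBall, hBcount⟩ := tbar_card c b hsubB
  have h2 : Nat.totient (orderOf c) ≤ Ncount c := ncount_ge c
  have hmemA : ∀ z ∈ Tbar a, z ∈ zpowers c := hsubA
  have hdvdA : ∀ γ ∈ A, γ ∣ orderOf c := by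
    intro γ hγ
    obtain ⟨z, hz, rfl⟩ := hAwit γ hγ
    exact orderOf_dvd_of_mem_zpowers (hsubA z hz)
  have hdvdB : ∀ γ ∈ B, γ ∣ orderOf c := by
    intro γ hγ
    obtain ⟨z, hz, rfl⟩ := hBwit γ hγ
    exact orderOf_dvd_of_mem_zpowers (hsubB z hz)
  have hchainA : ∀ γ ∈ A, ∀ γ' ∈ A, γ ∣ γ' ∨ γ' ∣ γ := by
    intro γ hγ γ' hγ'
    obtain ⟨z, hz, rfl⟩ := hAwit γ hγ
    obtain ⟨z', hz', rfl⟩ := hAwit γ' hγ'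
    rcases ccmp_in_Tbar hz hz' with h | h
    · exact Or.inl ((zpowers_le_iff_orderOf_dvd (hsubA z hz) (hsubA z' hz')).mp h)
    · exact Or.inr ((zpowers_le_iff_orderOf_dvd (hsubA z' hz') (hsubA z hz)).mp h)
  have hchainB : ∀ γ ∈ B, ∀ γ' ∈ B, γ ∣ γ' ∨ γ' ∣ γ := by
    intro γ hγ γ' hγ'
    obtain ⟨z, hz, rfl⟩ := hBwit γ hγ
    obtain ⟨z', hz', rfl⟩ := hBwit γ' hγ'
    rcases ccmp_in_Tbar hz hz' with h | h
    · exact Or.inl ((zpowers_le_iff_orderOf_dvd (hsubB z hz) (hsubB z' hz')).mp h)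
    · exact Or.inr ((zpowers_le_iff_orderOf_dvd (hsubB z' hz') (hsubB z hz)).mp h)
  have hSgen : ∀ (T : G) (W : Finset ℕ),
      (∀ γ ∈ W, ∃ z, z ∈ Tbar T ∧ orderOf z = γ) → (∀ z ∈ Tbar T, z ∈ zpowers c) →
      ∀ γ ∈ W, ∀ γ' ∈ W, ∀ f, f ∣ orderOf c → ((f ∣ γ ∨ γ ∣ f) → (f ∣ γ' ∨ γ' ∣ f)) := by
    intro T W hwit hsubT γ hγ γ' hγ' f hf hfc
    obtain ⟨z, hz, rfl⟩ := hwit γ hγ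
    obtain ⟨z', hz', rfl⟩ := hwit γ' hγ'
    set y := c ^ (orderOf c / f) with hy_def
    have hyc : y ∈ zpowers c := Subgroup.pow_mem _ (mem_zpowers c) _
    have hyo : orderOf y = f := orderOf_pow_div hf
    have hccyz : ccmp y z := by
      rcases hfc with h | h
      · exact Or.inl ((zpowers_le_iff_orderOf_dvd hyc (hsubT z hz)).mpr (by rw [hyo]; exact h))
      · exact Or.inr ((zpowers_le_iff_orderOf_dvd (hsubT z hz) hyc).mpr (by rw [hyo]; exact h))
    have hccyz' : ccmp z' y := (hz' y).mpr ((hz y).mp (ccmp_symm hccyz))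
    rcases hccyz' with h | h
    · exact Or.inr (hyo ▸ ((zpowers_le_iff_orderOf_dvd (hsubT z' hz') hyc).mp h))
    · exact Or.inl (hyo ▸ ((zpowers_le_iff_orderOf_dvd hyc (hsubT z' hz')).mp h))
  have hnm : ¬ orderOf a ∣ orderOf b := by
    intro h
    exact hcmp (Or.inl ((zpowers_le_iff_orderOf_dvd ha hb).mpr h))
  have hmn : ¬ orderOf b ∣ orderOf a := by
    intro h
    exact hcmp (Or.inr ((zpowers_le_iff_orderOf_dvd hb ha).mpr h))
  have h3 : ∑ γ ∈ A, Nat.totient γ < Nat.totient (orderOf c) := by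
    apply PGDIV.div2 (orderOf_pos c) hdvdA hdvdB hchainA hchainB
      (hSgen a A hAwit hsubA) (hSgen b B hBwit hsubB)
      (hAall a (mem_Tbar_self a)) (hBall b (mem_Tbar_self b)) hnm hmn
    rw [← hAcount, ← hBcount, ← ncount_eq, ← ncount_eq]
    exact heq
  have h4 : Ncount a = ∑ γ ∈ A, Nat.totient γ := by rw [ncount_eq, hAcount]
  omega

end Cyclic

end PGTHM

theorem stmt16 {G : Type*} [Group G] [Finite G] (hnc : ¬ IsCyclic G)
    (a b : G) (k : ℕ) (hne : a ≠ b) (hnadj : ¬ padj a b)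
    (hNa : Ncount a = k) (hNb : Ncount b = k) :
    eadj a b ↔ ∃ c : G, padj a c ∧ padj b c ∧ k < Ncount c := by
  open Subgroup PGTHM in
  have hncmp : ¬ PGTHM.ccmp a b := fun h => hnadj ⟨hne, h⟩
  constructor
  · rintro ⟨-, c, hac, hbc⟩
    have hanec : a ≠ c := by
      rintro rfl
      exact hncmp (Or.inr (Subgroup.zpowers_le.mpr hbc))
    have hbnec : b ≠ c := by
      rintro rfl
      exact hncmp (Or.inl (Subgroup.zpowers_le.mpr hac))
    refine ⟨c, ?_, ?_, ?_⟩
    · exact ⟨hanec, Or.inl (Subgroup.zpowers_le.mpr hac)⟩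
    · exact ⟨hbnec, Or.inl (Subgroup.zpowers_le.mpr hbc)⟩
    · have := PGTHM.main_lt hncmp hac hbc (hNa.trans hNb.symm)
      omega
  · rintro ⟨c, ⟨hneac, hccac⟩, ⟨hnebc, hccbc⟩, hk⟩
    by_cases hex : ∃ z ∈ PGTHM.Tbar c,
        Subgroup.zpowers a ≤ Subgroup.zpowers z ∧ Subgroup.zpowers b ≤ Subgroup.zpowers z
    · obtain ⟨z, hz, h1, h2⟩ := hex
      exact ⟨hne, z, h1 (Subgroup.mem_zpowers a), h2 (Subgroup.mem_zpowers b)⟩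
    · exfalso
      push_neg at hex
      have hsub : ∀ z ∈ PGTHM.Tbar c,
          Subgroup.zpowers z ≤ Subgroup.zpowers a ∧ Subgroup.zpowers z ≤ Subgroup.zpowers b := by
        intro z hz
        have hza : PGTHM.ccmp z a := (hz a).mpr (PGTHM.ccmp_symm hccac)
        have hzb : PGTHM.ccmp z b := (hz b).mpr (PGTHM.ccmp_symm hccbc)
        rcases hza with h1 | h1
        · rcases hzb with h2 | h2
          · exact ⟨h1, h2⟩
          · exact absurd (Or.inr (h2.trans h1) : PGTHM.ccmp a b) hncmp
        · rcases hzb with h2 | h2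
          · exact absurd (Or.inl (h1.trans h2) : PGTHM.ccmp a b) hncmp
          · exact absurd h2 (hex z hz h1)
      have := PGTHM.main_le hncmp hsub
      omega
end

section
/- Let G be a finite non-cyclic group and let h, k ∈ G both of order a power of the same prime p with ⟨e⟩ ≠ ⟨h⟩ ⊊ ⟨k⟩. Assume every element adjacent to h or to k in the power graph has prime-power order, and assume there exists a maximal chain C of cyclic subgroups of prime-power order with ⟨h⟩ ∈ C and ⟨k⟩ ∉ C. Then N_h ≤ p^{m−1} + 1 where |⟨k⟩| = p^m, and consequently N_h ≤ N_k. -/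
def IsPPChain {G : Type*} [Group G] (C : Set (Subgroup G)) : Prop :=
  IsChain (· ≤ ·) C ∧ ∀ H ∈ C, IsCyclic H ∧ ∃ q s : ℕ, q.Prime ∧ Nat.card H = q ^ s

lemma aux_zpowers_isCyclic {G : Type*} [Group G] (k : G) : IsCyclic ↥(Subgroup.zpowers k) := by
  constructor
  refine ⟨⟨k, Subgroup.mem_zpowers k⟩, ?_⟩
  rintro ⟨x, hx⟩
  obtain ⟨n, rfl⟩ := Subgroup.mem_zpowers_iff.1 hx
  exact ⟨n, Subtype.ext (by simp)⟩

lemma aux_sub_eq_of_le_card {G : Type*} [Group G] [Finite G] {H K : Subgroup G}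
    (hle : H ≤ K) (hcard : Nat.card K ≤ Nat.card H) : H = K := by
  have h1 : (K : Set G).ncard ≤ (H : Set G).ncard := by
    rwa [← Nat.card_coe_set_eq, ← Nat.card_coe_set_eq]
  exact SetLike.coe_injective (Set.eq_of_subset_of_ncard_le hle h1 (Set.toFinite _))

lemma aux_factA {G : Type*} [Group G] [Finite G] {c x : G} {d e : ℕ}
    (hx : x ∈ Subgroup.zpowers c) (hord : orderOf x ∣ d) (hde : d * e = orderOf c) :
    x ∈ Subgroup.zpowers (c ^ e) := by
  obtain ⟨j, hj⟩ := (mem_powers_iff_mem_zpowers).2 hx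
  have hj' : c ^ j = x := hj
  have hd0 : 0 < d := by
    rcases Nat.eq_zero_or_pos d with h0 | hpos
    · exfalso; rw [h0, zero_mul] at hde; exact (orderOf_pos c).ne' hde.symm
    · exact hpos
  have hxd : x ^ d = 1 := orderOf_dvd_iff_pow_eq_one.1 hord
  have hdv : orderOf c ∣ j * d := by
    rw [← hj', ← pow_mul] at hxd; exact orderOf_dvd_of_pow_eq_one hxd
  rw [← hde] at hdv
  have hej : e ∣ j := by
    have hh : d * e ∣ d * j := by rwa [Nat.mul_comm j d] at hdv
    exact (Nat.mul_dvd_mul_iff_left hd0).1 hh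
  obtain ⟨t, ht⟩ := hej
  refine (mem_powers_iff_mem_zpowers).1 ⟨t, ?_⟩
  show (c ^ e) ^ t = x
  rw [← pow_mul, ← ht, hj']

lemma aux_factB {G : Type*} [Group G] [Finite G] {x u v : G}
    (hu : u ∈ Subgroup.zpowers x) (hv : v ∈ Subgroup.zpowers x)
    (hdvd : orderOf u ∣ orderOf v) : u ∈ Subgroup.zpowers v := by
  set n := orderOf x with hn
  set d := orderOf v with hd
  have hdn : d ∣ n := orderOf_dvd_of_mem_zpowers hv
  obtain ⟨e, he⟩ := hdn
  have hveq : Subgroup.zpowers v = Subgroup.zpowers (x ^ e) := by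
    have h1 : v ∈ Subgroup.zpowers (x ^ e) := aux_factA hv dvd_rfl he.symm
    have h2 : Subgroup.zpowers v ≤ Subgroup.zpowers (x ^ e) := Subgroup.zpowers_le.2 h1
    refine aux_sub_eq_of_le_card h2 ?_
    rw [Nat.card_zpowers, Nat.card_zpowers]
    have he0 : e ≠ 0 := by
      rintro rfl; rw [mul_zero] at he; exact (orderOf_pos x).ne' he
    have hge : Nat.gcd n e = e := Nat.gcd_eq_right ⟨d, by rw [he, mul_comm]⟩
    have hoe : orderOf (x ^ e) = d := by
      rw [orderOf_pow, ← hn, hge, he, Nat.mul_div_cancel _ (Nat.pos_of_ne_zero he0)]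
    rw [hoe]
  rw [hveq]
  exact aux_factA hu hdvd he.symm

lemma aux_gen_of_isCyclic {G : Type*} [Group G] (H : Subgroup G) (hc : IsCyclic H) :
    ∃ g : G, Subgroup.zpowers g = H := by
  obtain ⟨⟨g, hgH⟩, hgen⟩ := hc.exists_generator
  refine ⟨g, le_antisymm (Subgroup.zpowers_le.2 hgH) ?_⟩
  intro x hx
  obtain ⟨n, hn⟩ := hgen ⟨x, hx⟩
  exact ⟨n, congrArg Subtype.val hn⟩

theorem stmt18 {G : Type*} [Group G] [Finite G] (hnc : ¬ IsCyclic G)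
    (p m₁ m : ℕ) (hp : p.Prime) (h k : G)
    (hh : orderOf h = p ^ m₁) (hm₁ : 1 ≤ m₁) (hk : orderOf k = p ^ m)
    (hsub : Subgroup.zpowers h < Subgroup.zpowers k)
    (hadj : ∀ t : G, (padj t h ∨ padj t k) → ∃ q s : ℕ, q.Prime ∧ orderOf t = q ^ s)
    (C : Set (Subgroup G)) (hC : IsPPChain C)
    (hmax : ∀ D : Set (Subgroup G), IsPPChain D → C ⊆ D → C = D)
    (hhC : Subgroup.zpowers h ∈ C) (hkC : Subgroup.zpowers k ∉ C) :
    Ncount h ≤ p ^ (m - 1) + 1 ∧ Ncount h ≤ Ncount k := by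
  set Zh := Subgroup.zpowers h with hZh
  set Zk := Subgroup.zpowers k with hZk
  -- m₁ < m
  have hhZk : h ∈ Zk := hsub.le (Subgroup.mem_zpowers h)
  have hdvd1 : p ^ m₁ ∣ p ^ m := by
    rw [← hh, ← hk]; exact orderOf_dvd_of_mem_zpowers hhZk
  have hm₁m : m₁ < m := by
    have hle : m₁ ≤ m := (Nat.pow_dvd_pow_iff_le_right hp.one_lt).1 hdvd1
    rcases lt_or_eq_of_le hle with hlt | heq
    · exact hlt
    · exfalso
      have : Zh = Zk := by
        refine aux_sub_eq_of_le_card hsub.le ?_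
        rw [hZh, hZk, Nat.card_zpowers, Nat.card_zpowers, hh, hk, heq]
      exact hsub.ne this
  have hm2 : 2 ≤ m := by omega
  have hm1succ : m - 1 + 1 = m := by omega
  have hde : p ^ (m - 1) * p = orderOf k := by
    rw [hk, ← pow_succ, hm1succ]
  -- the incomparable member of the chain
  have hexH' : ∃ H' ∈ C, ¬(H' ≤ Zk ∨ Zk ≤ H') := by
    by_contra hcon
    push_neg at hcon
    have hD : IsPPChain (insert Zk C) := by
      constructor
      · refine hC.1.insert ?_
        intro H hH _
        exact (hcon H hH).symm
      · intro H hH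
        rcases hH with rfl | hH
        · exact ⟨aux_zpowers_isCyclic k, p, m, hp, by rw [hZk, Nat.card_zpowers, hk]⟩
        · exact hC.2 H hH
    have := hmax _ hD (Set.subset_insert _ _)
    exact hkC (this ▸ Set.mem_insert Zk C)
  obtain ⟨H', hH'C, hinc⟩ := hexH'
  obtain ⟨hH'cyc, q, s, hq, hcardH'⟩ := hC.2 H' hH'C
  -- Zh ≤ H'
  have hZhH' : Zh ≤ H' := by
    by_cases heq : Zh = H'
    · exact le_of_eq heq
    · rcases hC.1 hhC hH'C heq with hle | hge
      · exact hle
      · exact absurd (Or.inl (hge.trans hsub.le)) hinc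
  obtain ⟨h', hh'⟩ := aux_gen_of_isCyclic H' hH'cyc
  have hordh' : orderOf h' = q ^ s := by
    rw [← Nat.card_zpowers, hh', hcardH']
  have hqp : q = p := by
    have hph : p ∣ orderOf h := by rw [hh]; exact dvd_pow_self p (by omega)
    have : orderOf h ∣ orderOf h' := by
      rw [← hh']  at hZhH'
      exact orderOf_dvd_of_mem_zpowers (hZhH' (Subgroup.mem_zpowers h))
    have hpq : p ∣ q ^ s := by rw [← hordh']; exact hph.trans this
    exact ((Nat.prime_dvd_prime_iff_eq hp hq).1 (hp.dvd_of_dvd_pow hpq)).symm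
  rw [hqp] at hordh'
  have hincH' : ¬(Subgroup.zpowers h' ≤ Zk ∨ Zk ≤ Subgroup.zpowers h') := by
    rw [hh']; exact hinc
  have hZhh' : Zh ≤ Subgroup.zpowers h' := by rw [hh']; exact hZhH'
  -- basic distinctness
  have hhk : h ≠ k := fun e => hsub.ne (by rw [hZh, hZk, e])
  have hhh' : h ≠ h' := by
    rintro rfl
    exact hincH' (Or.inl hsub.le)
  have hkh' : k ≠ h' := by
    rintro rfl
    exact hincH' (Or.inl le_rfl)
  have hpadjhk : padj h k := ⟨hhk, Or.inl hsub.le⟩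
  have hpadjhh' : padj h h' := ⟨hhh', Or.inl hZhh'⟩
  -- upper bound: twins of h lie in zpowers (k^p) \ {h}
  have htwinsub : closedTwins h ⊆ (↑(Subgroup.zpowers (k ^ p)) : Set G) \ {h} := by
    rintro x ⟨⟨hxh, _⟩, hnb⟩
    have hxk : x ≠ k := by
      rintro rfl
      have hmem : h' ∈ pnbhd h \ {x} := ⟨hpadjhh', fun e => hkh' (Set.mem_singleton_iff.1 e).symm⟩
      rw [hnb] at hmem
      exact hincH' hmem.1.2.symm
    have hxh' : x ≠ h' := by
      rintro rfl
      have hmem : k ∈ pnbhd h \ {x} := ⟨hpadjhk, fun e => hkh' (Set.mem_singleton_iff.1 e)⟩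
      rw [hnb] at hmem
      exact hincH' hmem.1.2
    have hcompk : Subgroup.zpowers x ≤ Zk ∨ Zk ≤ Subgroup.zpowers x := by
      have hmem : k ∈ pnbhd h \ {x} := ⟨hpadjhk, fun e => hxk (Set.mem_singleton_iff.1 e).symm⟩
      rw [hnb] at hmem
      exact hmem.1.2
    have hcomph' : Subgroup.zpowers x ≤ Subgroup.zpowers h' ∨ Subgroup.zpowers h' ≤ Subgroup.zpowers x := by
      have hmem : h' ∈ pnbhd h \ {x} := ⟨hpadjhh', fun e => hxh' (Set.mem_singleton_iff.1 e).symm⟩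
      rw [hnb] at hmem
      exact hmem.1.2
    have hxZk : Subgroup.zpowers x ≤ Zk := by
      rcases hcompk with hle | hge
      · exact hle
      · exfalso
        rcases hcomph' with hle' | hge'
        · exact hincH' (Or.inr (hge.trans hle'))
        · -- both k and h' in zpowers x : comparability contradiction
          have hkx : k ∈ Subgroup.zpowers x := hge (Subgroup.mem_zpowers k)
          have hh'x : h' ∈ Subgroup.zpowers x := hge' (Subgroup.mem_zpowers h')
          rcases le_total s m with hsm | hms
          · exact hincH' (Or.inl (Subgroup.zpowers_le.2
              (aux_factB hh'x hkx (by rw [hordh', hk]; exact pow_dvd_pow p hsm))))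
          · exact hincH' (Or.inr (Subgroup.zpowers_le.2
              (aux_factB hkx hh'x (by rw [hordh', hk]; exact pow_dvd_pow p hms))))
    have hxZh' : Subgroup.zpowers x ≤ Subgroup.zpowers h' := by
      rcases hcomph' with hle | hge
      · exact hle
      · exact absurd (Or.inl (hge.trans hxZk)) hincH'
    have hxne : Subgroup.zpowers x ≠ Zk := by
      intro heq
      exact hincH' (Or.inr (heq ▸ hxZh'))
    -- order of x divides p^(m-1)
    have hxdvd : orderOf x ∣ p ^ m := by
      rw [← hk]; exact orderOf_dvd_of_mem_zpowers (hxZk (Subgroup.mem_zpowers x))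
    obtain ⟨t, htm, hxt⟩ := (Nat.dvd_prime_pow hp).1 hxdvd
    have htm' : t ≠ m := by
      rintro rfl
      refine hxne (aux_sub_eq_of_le_card hxZk ?_)
      rw [Nat.card_zpowers, Nat.card_zpowers, hk, hxt]
    have hxd1 : orderOf x ∣ p ^ (m - 1) := by
      rw [hxt]; exact pow_dvd_pow p (by omega)
    refine ⟨aux_factA (hxZk (Subgroup.mem_zpowers x)) hxd1 hde, ?_⟩
    simp only [Set.mem_singleton_iff]
    exact fun e => hxh (e ▸ rfl)
  -- cardinalities
  have hordkp : orderOf (k ^ p) = p ^ (m - 1) := by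
    rw [orderOf_pow, hk]
    have hg : Nat.gcd (p ^ m) p = p := Nat.gcd_eq_right (dvd_pow_self p (by omega))
    rw [hg, ← hm1succ, pow_succ, Nat.mul_div_cancel _ hp.pos]
    congr 1
  have hcardkp : (↑(Subgroup.zpowers (k ^ p)) : Set G).ncard = p ^ (m - 1) := by
    rw [← Nat.card_coe_set_eq]
    rw [show Nat.card (↑(Subgroup.zpowers (k ^ p)) : Set G) = Nat.card (Subgroup.zpowers (k ^ p)) from rfl]
    rw [Nat.card_zpowers, hordkp]
  have hhkp : h ∈ Subgroup.zpowers (k ^ p) := by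
    refine aux_factA hhZk ?_ hde
    rw [hh]; exact pow_dvd_pow p (by omega)
  have hNh : Ncount h ≤ p ^ (m - 1) := by
    have h1 : (closedTwins h).ncard ≤ ((↑(Subgroup.zpowers (k ^ p)) : Set G) \ {h}).ncard :=
      Set.ncard_le_ncard htwinsub (Set.toFinite _)
    have h2 : ((↑(Subgroup.zpowers (k ^ p)) : Set G) \ {h}).ncard = p ^ (m - 1) - 1 := by
      rw [Set.ncard_diff_singleton_of_mem hhkp, hcardkp]
    have h3 : 1 ≤ p ^ (m - 1) := Nat.one_le_pow _ _ hp.pos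
    unfold Ncount
    omega
  -- lower bound on Ncount k
  have hkpk : (↑(Subgroup.zpowers (k ^ p)) : Set G) ⊆ (↑Zk : Set G) :=
    Subgroup.zpowers_le.2 (Subgroup.pow_mem _ (Subgroup.mem_zpowers k) p)
  have hknot : k ∉ Subgroup.zpowers (k ^ p) := by
    intro hmem
    have : Zk ≤ Subgroup.zpowers (k ^ p) := Subgroup.zpowers_le.2 hmem
    have hcd : Nat.card Zk ≤ Nat.card (Subgroup.zpowers (k ^ p)) :=
      Nat.le_of_dvd Nat.card_pos (Subgroup.card_dvd_of_le this)
    rw [Nat.card_zpowers, Nat.card_zpowers, hk, hordkp] at hcd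
    have := Nat.pow_lt_pow_right hp.one_lt (show m - 1 < m by omega)
    omega
  have hgensub : ((↑Zk : Set G) \ ↑(Subgroup.zpowers (k ^ p))) \ {k} ⊆ closedTwins k := by
    rintro x ⟨⟨hxZk, hxnkp⟩, hxk⟩
    simp only [Set.mem_singleton_iff] at hxk
    have hxdvd : orderOf x ∣ p ^ m := by
      rw [← hk]; exact orderOf_dvd_of_mem_zpowers hxZk
    obtain ⟨t, htm, hxt⟩ := (Nat.dvd_prime_pow hp).1 hxdvd
    have htm' : t = m := by
      by_contra hne
      refine hxnkp (aux_factA hxZk ?_ hde)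
      rw [hxt]; exact pow_dvd_pow p (by omega)
    have hZxk : Subgroup.zpowers x = Zk := by
      refine aux_sub_eq_of_le_card (Subgroup.zpowers_le.2 hxZk) ?_
      rw [Nat.card_zpowers, Nat.card_zpowers, hk, hxt, htm']
    have hZxk' : Subgroup.zpowers x = Subgroup.zpowers k := hZxk
    refine ⟨⟨fun e => hxk e.symm, Or.inl hZxk'.ge⟩, ?_⟩
    ext t'
    simp only [Set.mem_diff, Set.mem_singleton_iff, pnbhd, padj, Set.mem_setOf_eq]
    constructor
    · rintro ⟨⟨hkt, hcomp⟩, htx⟩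
      exact ⟨⟨fun e => htx e.symm, by rw [hZxk']; exact hcomp⟩, fun e => hkt e.symm⟩
    · rintro ⟨⟨hxt', hcomp⟩, htk⟩
      exact ⟨⟨fun e => htk e.symm, by rw [← hZxk']; exact hcomp⟩, fun e => hxt' e.symm⟩
  have hcardZk : (↑Zk : Set G).ncard = p ^ m := by
    rw [← Nat.card_coe_set_eq]
    rw [show Nat.card (↑Zk : Set G) = Nat.card Zk from rfl]
    rw [Nat.card_zpowers, hk]
  have hNk : p ^ m - p ^ (m - 1) ≤ Ncount k := by
    have h1 : (((↑Zk : Set G) \ ↑(Subgroup.zpowers (k ^ p))) \ {k}).ncard ≤ (closedTwins k).ncard :=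
      Set.ncard_le_ncard hgensub (Set.toFinite _)
    have h2 : ((↑Zk : Set G) \ ↑(Subgroup.zpowers (k ^ p))).ncard = p ^ m - p ^ (m - 1) := by
      rw [Set.ncard_diff hkpk (Set.toFinite _), hcardZk, hcardkp]
    have hkmem : k ∈ (↑Zk : Set G) \ ↑(Subgroup.zpowers (k ^ p)) :=
      ⟨Subgroup.mem_zpowers k, hknot⟩
    have h3 : (((↑Zk : Set G) \ ↑(Subgroup.zpowers (k ^ p))) \ {k}).ncard
        = (p ^ m - p ^ (m - 1)) - 1 := by
      rw [Set.ncard_diff_singleton_of_mem hkmem, h2]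
    have h4 : 2 * p ^ (m - 1) ≤ p ^ m := by
      calc 2 * p ^ (m - 1) ≤ p * p ^ (m - 1) := Nat.mul_le_mul_right _ hp.two_le
        _ = p ^ m := by rw [← pow_succ', hm1succ]
    have h5 : 1 ≤ p ^ (m - 1) := Nat.one_le_pow _ _ hp.pos
    unfold Ncount
    omega
  constructor
  · omega
  · have h4 : 2 * p ^ (m - 1) ≤ p ^ m := by
      calc 2 * p ^ (m - 1) ≤ p * p ^ (m - 1) := Nat.mul_le_mul_right _ hp.two_le
        _ = p ^ m := by rw [← pow_succ', hm1succ]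
    omega
end
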